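/- arXiv:1408.2693 — 6 statements merged into one kernel-verified Lean document; each statement's English description precedes it below -/
import Mathlib

section
/- Let L > 0 and let γ : [0,L] → ℝ² be continuous and injective. Suppose there exist break points 0 = s_0 < s_1 < … < s_M = L such that the restriction of γ to each [s_{m−1}, s_m] is twice continuously differentiable (with one-sided derivatives at the endpoints), that |γ'(t)| = 1 on each piece (so γ is an arclength parametrization), and that at each interior break point s_m the one-sided derivatives satisfy γ'(s_m−) + c·γ'(s_m+) ≠ 0 for every real c > 0. Then there exists a constant C_Γ ≥ 1 such that C_Γ^{−1} |s − t| ≤ |γ(s) − γ(t)| ≤ C_Γ |s − t| for all s, t ∈ [0,L] with s ≠ t. -/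
/-! Both bounds rest on one observation: if `c ≤ ⟪w, γ'⟫` on an interval, then
`x ↦ ⟪w, γ x⟫ - c * x` is monotone there, so `c * (y - x) ≤ ⟪w, γ y - γ x⟫` for `x ≤ y`.
With `w = -(γ y - γ x)` and `c = -‖w‖` this is the upper bound, piece by piece and then glued at
the break points. For the lower bound take `‖w‖ ≤ 1` and `c > 0`: inside a piece `w = γ'(t)`
works near `t`, and at a corner the condition says the two one-sided unit tangents are not
opposite, so their mean has positive inner product with both. Compactness of `[0, L]²` turns these
local bounds, together with continuity and injectivity off the diagonal, into a global one. -/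

open Set Filter Topology
open scoped InnerProductSpace

theorem monotoneOn_Icc_of_monotoneOn_Icc_succ {α β : Type*} [LinearOrder α] [Preorder β]
    {f : α → β} {s : ℕ → α} {n : ℕ} (hf : ∀ m < n, MonotoneOn f (Icc (s m) (s (m + 1)))) :
    MonotoneOn f (Icc (s 0) (s n)) := by
  induction n with
  | zero => simp
  | succ n ih =>
    have h₁ := ih fun m hm => hf m (by omega)
    have h₂ := hf n (by omega)
    rcases le_total (s 0) (s n) with h0 | h0
    · rcases le_total (s n) (s (n + 1)) with h1 | h1
      · rw [← Icc_union_Icc_eq_Icc h0 h1]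
        exact h₁.union_right h₂ (isGreatest_Icc h0) (isLeast_Icc h1)
      · exact h₁.mono (Icc_subset_Icc_right h1)
    · exact h₂.mono (Icc_subset_Icc_left h0)

theorem MonotoneOn.Icc_inter_union {α β : Type*} [LinearOrder α] [Preorder β]
    {f : α → β} {a b c : α} {I : Set α} (hab : a ≤ b) (hbc : b ≤ c) (hb : b ∈ I)
    (h₁ : MonotoneOn f (Icc a b ∩ I)) (h₂ : MonotoneOn f (Icc b c ∩ I)) :
    MonotoneOn f (Icc a c ∩ I) := by
  rw [← Icc_union_Icc_eq_Icc hab hbc, union_inter_distrib_right]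
  exact h₁.union_right h₂ ⟨⟨right_mem_Icc.2 hab, hb⟩, fun x hx => hx.1.2⟩
    ⟨⟨left_mem_Icc.2 hbc, hb⟩, fun x hx => hx.1.1⟩

theorem Icc_mem_nhdsWithin_Icc {a b c d t : ℝ} (ha : a = c ∨ a < t) (hb : b = d ∨ t < b) :
    Icc a b ∈ 𝓝[Icc c d] t := by
  rw [← Ici_inter_Iic]
  refine inter_mem ?_ ?_
  · rcases ha with rfl | ha
    · exact mem_of_superset self_mem_nhdsWithin fun x hx => hx.1
    · exact mem_nhdsWithin_of_mem_nhds (Ici_mem_nhds ha)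
  · rcases hb with rfl | hb
    · exact mem_of_superset self_mem_nhdsWithin fun x hx => hx.2
    · exact mem_nhdsWithin_of_mem_nhds (Iic_mem_nhds hb)

theorem exists_pos_mul_dist_le_dist_of_isCompact {X Y : Type*} [MetricSpace X] [MetricSpace Y]
    {f : X → Y} {K : Set X} (hK : IsCompact K) (hf : ContinuousOn f K) (hinj : InjOn f K)
    (hloc : ∀ t ∈ K, ∃ c > 0, ∃ U ∈ 𝓝[K] t, ∀ x ∈ U, ∀ y ∈ U,
      c * dist x y ≤ dist (f x) (f y)) :
    ∃ c > 0, ∀ x ∈ K, ∀ y ∈ K, c * dist x y ≤ dist (f x) (f y) := by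
  suffices h : ∃ c > 0, ∀ q ∈ K ×ˢ K, c * dist q.1 q.2 ≤ dist (f q.1) (f q.2) by
    obtain ⟨c, hc, h⟩ := h
    exact ⟨c, hc, fun x hx y hy => h (x, y) ⟨hx, hy⟩⟩
  refine (hK.prod hK).induction_on ⟨1, one_pos, by simp⟩ ?_ ?_ ?_
  · rintro S T hST ⟨c, hc, h⟩
    exact ⟨c, hc, fun q hq => h q (hST hq)⟩
  · rintro S T ⟨c, hc, hS⟩ ⟨d, hd, hT⟩
    refine ⟨min c d, lt_min hc hd, fun q hq => ?_⟩
    rcases hq with hq | hq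
    · exact (mul_le_mul_of_nonneg_right (min_le_left c d) dist_nonneg).trans (hS q hq)
    · exact (mul_le_mul_of_nonneg_right (min_le_right c d) dist_nonneg).trans (hT q hq)
  rintro ⟨x, y⟩ ⟨hx, hy⟩
  rcases eq_or_ne x y with rfl | hxy
  · obtain ⟨c, hc, U, hU, hcU⟩ := hloc x hx
    refine ⟨U ×ˢ U, ?_, c, hc, fun q hq => hcU _ hq.1 _ hq.2⟩
    rw [nhdsWithin_prod_eq]
    exact prod_mem_prod hU hU
  · have hfxy : 0 < dist (f x) (f y) := dist_pos.2 fun h => hxy (hinj hx hy h)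
    have hdxy : 0 < dist x y := dist_pos.2 hxy
    set c := dist (f x) (f y) / (2 * dist x y)
    have hlt : c * dist x y < dist (f x) (f y) := by
      rw [div_mul_eq_mul_div, mul_div_mul_right _ _ hdxy.ne']
      linarith
    have hcont : ContinuousWithinAt (fun q : X × X => dist (f q.1) (f q.2)) (K ×ˢ K) (x, y) :=
      ((hf x hx).comp continuousWithinAt_fst fun q hq => hq.1).dist
        ((hf y hy).comp continuousWithinAt_snd fun q hq => hq.2)
    have hev := ((continuous_const.mul continuous_dist).continuousWithinAt).eventually_lt
      hcont hlt
    exact ⟨_, hev, c, by positivity, fun q hq => le_of_lt hq⟩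

section
variable {E : Type*} [NormedAddCommGroup E] [InnerProductSpace ℝ E]

theorem monotoneOn_inner_sub_mul {f : ℝ → E} {a b c : ℝ} {w : E} {D : Set ℝ}
    (hD : Convex ℝ D) (hDab : D ⊆ Icc a b) (hf : DifferentiableOn ℝ f (Icc a b))
    (hc : ∀ x ∈ D, c ≤ ⟪w, derivWithin f (Icc a b) x⟫_ℝ) :
    MonotoneOn (fun x => ⟪w, f x⟫_ℝ - c * x) D := by
  have hint : interior D ⊆ Ioo a b := interior_Icc (a := a) (b := b) ▸ interior_mono hDab
  have hderiv : ∀ x ∈ interior D,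
      HasDerivAt (fun x => ⟪w, f x⟫_ℝ - c * x) (⟪w, derivWithin f (Icc a b) x⟫_ℝ - c) x := by
    intro x hx
    have hnhds : Icc a b ∈ 𝓝 x := Icc_mem_nhds (hint hx).1 (hint hx).2
    rw [derivWithin_of_mem_nhds hnhds]
    have := ((hasDerivAt_const x w).inner ℝ
      ((hf x (Ioo_subset_Icc_self (hint hx))).differentiableAt hnhds).hasDerivAt).fun_sub
      ((hasDerivAt_id' x).const_mul c)
    simpa only [inner_zero_left, add_zero, mul_one] using this
  refine monotoneOn_of_deriv_nonneg hD ?_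
    (fun x hx => (hderiv x hx).differentiableAt.differentiableWithinAt) ?_
  · exact ((innerSL ℝ w).continuous.comp_continuousOn (hf.continuousOn.mono hDab)).sub
      (continuousOn_const.mul continuousOn_id)
  · intro x hx
    rw [(hderiv x hx).deriv, sub_nonneg]
    exact hc x (interior_subset hx)

theorem mul_dist_le_dist_of_monotoneOn_inner_sub_mul {f : ℝ → E} {c : ℝ} {w : E} {U : Set ℝ}
    (hw : ‖w‖ ≤ 1) (h : MonotoneOn (fun x => ⟪w, f x⟫_ℝ - c * x) U) {x y : ℝ} (hx : x ∈ U)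
    (hy : y ∈ U) : c * dist x y ≤ dist (f x) (f y) := by
  wlog hxy : x ≤ y generalizing x y
  · rw [dist_comm, dist_comm (f x)]
    exact this hy hx (le_of_not_ge hxy)
  have hmono := h hx hy hxy
  simp only at hmono
  calc c * dist x y = c * (y - x) := by
        rw [Real.dist_eq, abs_sub_comm, abs_of_nonneg (by linarith)]
    _ ≤ ⟪w, f y - f x⟫_ℝ := by rw [inner_sub_right]; linarith
    _ ≤ ‖w‖ * ‖f y - f x‖ := real_inner_le_norm _ _
    _ ≤ 1 * ‖f y - f x‖ := by gcongr
    _ = dist (f x) (f y) := by rw [one_mul, dist_eq_norm']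

theorem exists_monotoneOn_inner_sub_mul_Icc_inter {f : ℝ → E} {a b c t : ℝ} {w : E}
    (hab : a < b) (hf : ContDiffOn ℝ 1 f (Icc a b)) (ht : t ∈ Icc a b)
    (hc : c < ⟪w, derivWithin f (Icc a b) t⟫_ℝ) :
    ∃ ε > 0, MonotoneOn (fun x => ⟪w, f x⟫_ℝ - c * x) (Icc a b ∩ Icc (t - ε) (t + ε)) := by
  have hcont : ContinuousWithinAt (fun x => ⟪w, derivWithin f (Icc a b) x⟫_ℝ) (Icc a b) t :=
    ((innerSL ℝ w).continuous.comp_continuousOn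
      (hf.continuousOn_derivWithin (uniqueDiffOn_Icc hab) le_rfl)) t ht
  obtain ⟨ε, hε, hball⟩ := Metric.mem_nhdsWithin_iff.1 (hcont.eventually_const_lt hc)
  refine ⟨ε / 2, half_pos hε, monotoneOn_inner_sub_mul ((convex_Icc a b).inter (convex_Icc _ _))
    inter_subset_left (hf.differentiableOn one_ne_zero) fun x hx => (hball ⟨?_, hx.1⟩).le⟩
  rw [Metric.mem_ball, Real.dist_eq, abs_lt]
  constructor <;> linarith [hx.2.1, hx.2.2]

theorem exists_inner_pos_of_add_ne_zero {v₁ v₂ : E} (h₁ : ‖v₁‖ = 1) (h₂ : ‖v₂‖ = 1)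
    (h : v₁ + v₂ ≠ 0) : ∃ w : E, ‖w‖ ≤ 1 ∧ 0 < ⟪w, v₁⟫_ℝ ∧ 0 < ⟪w, v₂⟫_ℝ := by
  have hpos : 0 < 1 + ⟪v₁, v₂⟫_ℝ := by
    have hsq := norm_add_sq_real v₁ v₂
    rw [h₁, h₂] at hsq
    nlinarith [norm_pos_iff.2 h]
  refine ⟨(1 / 2 : ℝ) • (v₁ + v₂), ?_, ?_, ?_⟩
  · rw [norm_smul]
    have := norm_add_le v₁ v₂
    rw [h₁, h₂] at this
    norm_num
    linarith
  · rw [real_inner_smul_left, inner_add_left, real_inner_self_eq_norm_sq, h₁, real_inner_comm]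
    nlinarith
  · rw [real_inner_smul_left, inner_add_left, real_inner_self_eq_norm_sq, h₂]
    nlinarith

theorem exists_lt_mem_Icc_succ {α : Type*} [LinearOrder α] {s : ℕ → α} {M : ℕ} (hM : 1 ≤ M)
    {t : α} (ht : t ∈ Icc (s 0) (s M)) :
    ∃ m < M, t ∈ Icc (s m) (s (m + 1)) ∧ (m = 0 ∨ s m < t) := by
  classical
  have hex : ∃ m, t ≤ s (m + 1) := ⟨M - 1, by rw [Nat.sub_add_cancel hM]; exact ht.2⟩
  obtain ⟨m, hm, hmin⟩ : ∃ m, t ≤ s (m + 1) ∧ ∀ k < m, ¬t ≤ s (k + 1) :=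
    ⟨Nat.find hex, Nat.find_spec hex, fun k hk => Nat.find_min hex hk⟩
  have hlow : m = 0 ∨ s m < t := by
    refine (Nat.eq_zero_or_pos m).imp_right fun hm => ?_
    have := hmin (m - 1) (by omega)
    rwa [Nat.sub_add_cancel hm, not_le] at this
  have hmM : m < M := by
    by_contra! h
    exact hmin (M - 1) (by omega) (by rw [Nat.sub_add_cancel hM]; exact ht.2)
  refine ⟨m, hmM, ⟨?_, hm⟩, hlow⟩
  rcases hlow with h | h
  · rw [h]; exact ht.1
  · exact h.le

structure PiecewiseUnitSpeed (γ : ℝ → E) (M : ℕ) (s : ℕ → ℝ) : Prop where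
  lt : ∀ m < M, s m < s (m + 1)
  contDiffOn : ∀ m < M, ContDiffOn ℝ 1 γ (Icc (s m) (s (m + 1)))
  norm_derivWithin : ∀ m < M, ∀ t ∈ Icc (s m) (s (m + 1)),
    ‖derivWithin γ (Icc (s m) (s (m + 1))) t‖ = 1

namespace PiecewiseUnitSpeed

variable {γ : ℝ → E} {M : ℕ} {s : ℕ → ℝ}

theorem dist_le (hγ : PiecewiseUnitSpeed γ M s) {x y : ℝ} (hx : x ∈ Icc (s 0) (s M))
    (hy : y ∈ Icc (s 0) (s M)) : dist (γ x) (γ y) ≤ dist x y := by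
  wlog hxy : x ≤ y generalizing x y
  · rw [dist_comm, dist_comm x]
    exact this hy hx (le_of_not_ge hxy)
  set u := γ y - γ x
  have hmono : MonotoneOn (fun z => ⟪-u, γ z⟫_ℝ - -‖u‖ * z) (Icc (s 0) (s M)) :=
    monotoneOn_Icc_of_monotoneOn_Icc_succ fun m hm =>
      monotoneOn_inner_sub_mul (convex_Icc _ _) subset_rfl
        ((hγ.contDiffOn m hm).differentiableOn one_ne_zero) fun z hz => by
          rw [inner_neg_left, neg_le_neg_iff]
          simpa [hγ.norm_derivWithin m hm z hz] using real_inner_le_norm u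
            (derivWithin γ (Icc (s m) (s (m + 1))) z)
  have key : ‖u‖ * ‖u‖ ≤ ‖u‖ * (y - x) := by
    have := hmono hx hy hxy
    simp only [inner_neg_left] at this
    rw [← real_inner_self_eq_norm_mul_norm, inner_sub_right]
    linarith
  rw [dist_eq_norm', Real.dist_eq, abs_sub_comm, abs_of_nonneg (sub_nonneg.2 hxy)]
  rcases (norm_nonneg u).eq_or_lt with h | h
  · rw [← h]; linarith
  · exact le_of_mul_le_mul_left key h

theorem exists_mul_dist_le_dist_nhdsWithin (hγ : PiecewiseUnitSpeed γ M s) (hM : 1 ≤ M)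
    (hcorner : ∀ m, m + 1 < M → derivWithin γ (Icc (s m) (s (m + 1))) (s (m + 1))
      + derivWithin γ (Icc (s (m + 1)) (s (m + 2))) (s (m + 1)) ≠ 0)
    {t : ℝ} (ht : t ∈ Icc (s 0) (s M)) :
    ∃ c > 0, ∃ U ∈ 𝓝[Icc (s 0) (s M)] t, ∀ x ∈ U, ∀ y ∈ U, c * dist x y ≤ dist (γ x) (γ y) := by
  suffices h : ∃ w : E, ‖w‖ ≤ 1 ∧ ∃ c > 0, ∃ U ∈ 𝓝[Icc (s 0) (s M)] t,
      MonotoneOn (fun x => ⟪w, γ x⟫_ℝ - c * x) U by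
    obtain ⟨w, hw, c, hc, U, hU, hmono⟩ := h
    exact ⟨c, hc, U, hU, fun x hx y hy =>
      mul_dist_le_dist_of_monotoneOn_inner_sub_mul hw hmono hx hy⟩
  obtain ⟨m, hm, htm, hlow⟩ := exists_lt_mem_Icc_succ hM ht
  by_cases hcor : m + 1 < M ∧ t = s (m + 1)
  · obtain ⟨hm₁, rfl⟩ := hcor
    have hlt₁ : s m < s (m + 1) := hγ.lt m hm
    have hlt₂ : s (m + 1) < s (m + 2) := hγ.lt (m + 1) hm₁
    set v₁ := derivWithin γ (Icc (s m) (s (m + 1))) (s (m + 1))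
    set v₂ := derivWithin γ (Icc (s (m + 1)) (s (m + 2))) (s (m + 1))
    obtain ⟨w, hw, hw₁, hw₂⟩ : ∃ w : E, ‖w‖ ≤ 1 ∧ 0 < ⟪w, v₁⟫_ℝ ∧ 0 < ⟪w, v₂⟫_ℝ :=
      exists_inner_pos_of_add_ne_zero
        (hγ.norm_derivWithin m hm _ (right_mem_Icc.2 hlt₁.le))
        (hγ.norm_derivWithin (m + 1) hm₁ _ (left_mem_Icc.2 hlt₂.le)) (hcorner m hm₁)
    set c := min ⟪w, v₁⟫_ℝ ⟪w, v₂⟫_ℝ / 2 with hc_def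
    have hmin := lt_min hw₁ hw₂
    have hc : 0 < c := by positivity
    obtain ⟨ε₁, hε₁, hmono₁⟩ := exists_monotoneOn_inner_sub_mul_Icc_inter hlt₁
      (hγ.contDiffOn m hm) (right_mem_Icc.2 hlt₁.le)
      (show c < ⟪w, v₁⟫_ℝ by rw [hc_def]; linarith [min_le_left ⟪w, v₁⟫_ℝ ⟪w, v₂⟫_ℝ])
    obtain ⟨ε₂, hε₂, hmono₂⟩ := exists_monotoneOn_inner_sub_mul_Icc_inter hlt₂
      (hγ.contDiffOn (m + 1) hm₁) (left_mem_Icc.2 hlt₂.le)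
      (show c < ⟪w, v₂⟫_ℝ by rw [hc_def]; linarith [min_le_right ⟪w, v₁⟫_ℝ ⟪w, v₂⟫_ℝ])
    set ε := min ε₁ ε₂
    have hε : 0 < ε := lt_min hε₁ hε₂
    have hI : ∀ {δ}, ε ≤ δ → Icc (s (m + 1) - ε) (s (m + 1) + ε)
        ⊆ Icc (s (m + 1) - δ) (s (m + 1) + δ) := fun h =>
      Icc_subset_Icc (by linarith) (by linarith)
    refine ⟨w, hw, c, hc, Icc (s m) (s (m + 2)) ∩ Icc (s (m + 1) - ε) (s (m + 1) + ε),
      inter_mem (Icc_mem_nhdsWithin_Icc (.inr hlt₁) (.inr hlt₂))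
        (mem_nhdsWithin_of_mem_nhds (Icc_mem_nhds (by linarith) (by linarith))),
      MonotoneOn.Icc_inter_union hlt₁.le hlt₂.le ⟨by linarith, by linarith⟩
        (hmono₁.mono (inter_subset_inter_right _ (hI (min_le_left _ _))))
        (hmono₂.mono (inter_subset_inter_right _ (hI (min_le_right _ _))))⟩
  · have hv := hγ.norm_derivWithin m hm t htm
    obtain ⟨ε, hε, hmono⟩ := exists_monotoneOn_inner_sub_mul_Icc_inter (c := 1 / 2) (hγ.lt m hm)
      (hγ.contDiffOn m hm) htm (by rw [real_inner_self_eq_norm_sq, hv]; norm_num)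
    have hup : s (m + 1) = s M ∨ t < s (m + 1) := by
      rcases (Nat.succ_le_of_lt hm).lt_or_eq with h | h
      · exact .inr (htm.2.lt_of_ne fun h' => hcor ⟨h, h'⟩)
      · exact .inl (congrArg s h)
    exact ⟨_, hv.le, 1 / 2, by norm_num, _,
      inter_mem (Icc_mem_nhdsWithin_Icc (hlow.imp_left (congrArg s)) hup)
        (mem_nhdsWithin_of_mem_nhds (Icc_mem_nhds (by linarith) (by linarith))), hmono⟩

end PiecewiseUnitSpeed

end

theorem biLipschitz_of_piecewise_smooth_arclength_general
    (L : ℝ) (γ : ℝ → EuclideanSpace ℝ (Fin 2))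
    (M : ℕ) (hM : 1 ≤ M) (s : ℕ → ℝ)
    (hs0 : s 0 = 0) (hsM : s M = L) (hsmono : ∀ m < M, s m < s (m + 1))
    (hcont : ContinuousOn γ (Icc 0 L))
    (hinj : InjOn γ (Icc 0 L))
    (hC2 : ∀ m < M, ContDiffOn ℝ 2 γ (Icc (s m) (s (m + 1))))
    (hunit : ∀ m < M, ∀ t ∈ Icc (s m) (s (m + 1)),
      ‖derivWithin γ (Icc (s m) (s (m + 1))) t‖ = 1)
    (hcorner : ∀ m, 0 < m → m < M → ∀ c : ℝ, 0 < c →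
      derivWithin γ (Icc (s (m - 1)) (s m)) (s m)
        + c • derivWithin γ (Icc (s m) (s (m + 1))) (s m) ≠ 0) :
    ∃ C : ℝ, 1 ≤ C ∧ ∀ x ∈ Icc (0 : ℝ) L, ∀ y ∈ Icc (0 : ℝ) L, x ≠ y →
      C⁻¹ * |x - y| ≤ ‖γ x - γ y‖ ∧ ‖γ x - γ y‖ ≤ C * |x - y| := by
  have hγ : PiecewiseUnitSpeed γ M s :=
    ⟨hsmono, fun m hm => (hC2 m hm).of_le one_le_two, hunit⟩
  have hcorner' : ∀ m, m + 1 < M → derivWithin γ (Icc (s m) (s (m + 1))) (s (m + 1))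
      + derivWithin γ (Icc (s (m + 1)) (s (m + 2))) (s (m + 1)) ≠ 0 := fun m hm => by
    simpa using hcorner (m + 1) m.succ_pos hm 1 one_pos
  subst hsM
  rw [← hs0] at hcont hinj ⊢
  obtain ⟨c, hc, hlow⟩ := exists_pos_mul_dist_le_dist_of_isCompact isCompact_Icc hcont hinj
    fun t ht => hγ.exists_mul_dist_le_dist_nhdsWithin hM hcorner' ht
  refine ⟨max 1 c⁻¹, le_max_left _ _, fun x hx y hy _ => ?_⟩
  rw [← Real.dist_eq, ← dist_eq_norm]
  have hCc : (max 1 c⁻¹)⁻¹ ≤ c := inv_le_of_inv_le₀ hc (le_max_right _ _)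
  exact ⟨(mul_le_mul_of_nonneg_right hCc dist_nonneg).trans (hlow x hx y hy),
    (hγ.dist_le hx hy).trans (le_mul_of_one_le_left dist_nonneg (le_max_left _ _))⟩

/-- Bi-Lipschitz continuity of a piecewise smooth arclength parametrization of an
open boundary piece. -/
theorem biLipschitz_of_piecewise_smooth_arclength
    (L : ℝ) (hL : 0 < L) (γ : ℝ → EuclideanSpace ℝ (Fin 2))
    (M : ℕ) (hM : 1 ≤ M) (s : ℕ → ℝ)
    (hs0 : s 0 = 0) (hsM : s M = L) (hsmono : ∀ m < M, s m < s (m + 1))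
    (hcont : ContinuousOn γ (Icc 0 L))
    (hinj : InjOn γ (Icc 0 L))
    (hC2 : ∀ m < M, ContDiffOn ℝ 2 γ (Icc (s m) (s (m + 1))))
    (hunit : ∀ m < M, ∀ t ∈ Icc (s m) (s (m + 1)),
      ‖derivWithin γ (Icc (s m) (s (m + 1))) t‖ = 1)
    (hcorner : ∀ m, 0 < m → m < M → ∀ c : ℝ, 0 < c →
      derivWithin γ (Icc (s (m - 1)) (s m)) (s m)
        + c • derivWithin γ (Icc (s m) (s (m + 1))) (s m) ≠ 0) :
    ∃ C : ℝ, 1 ≤ C ∧ ∀ x ∈ Icc (0 : ℝ) L, ∀ y ∈ Icc (0 : ℝ) L, x ≠ y →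
      C⁻¹ * |x - y| ≤ ‖γ x - γ y‖ ∧ ‖γ x - γ y‖ ≤ C * |x - y| :=
  biLipschitz_of_piecewise_smooth_arclength_general L γ M hM s hs0 hsM hsmono hcont hinj hC2 hunit
    hcorner
end

section
/- Let a = z_0 < z_1 < … < z_n = b be a partition of the interval [a,b] and define the node patches ω_0 := [z_0, z_1], ω_j := [z_{j−1}, z_{j+1}] for 1 ≤ j ≤ n−1, and ω_n := [z_{n−1}, z_n]. Then for every u ∈ L²([a,b]) with ‖u‖_{H^{1/2}([a,b])} < ∞ it holds Σ_{j=0}^{n} |u|²_{H^{1/2}(ω_j)} ≤ 2 ‖u‖²_{H^{1/2}([a,b])}. -/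
open Set MeasureTheory

/-! Every point lies in at most two of the patches `[z_{j-1}, z_{j+1})`, and for `x` in a patch
the inner integral of `|u(x) - u(y)|² / |x - y|²` over the patch is at most the one over `[a, b]`.
Summing over the patches therefore counts the double integral over `[a, b]²` at most twice. -/

/-- Squared Sobolev–Slobodeckij seminorm `|u|_{H^{1/2}(s)}²`. -/
noncomputable def sobSemiSq (u : ℝ → ℝ) (s : Set ℝ) : ENNReal :=
  ∫⁻ x in s, ∫⁻ y in s, ENNReal.ofReal ((u x - u y) ^ 2 / (x - y) ^ 2)

/-- Squared `L²` norm `‖u‖_{L²(s)}²`. -/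
noncomputable def l2Sq (u : ℝ → ℝ) (s : Set ℝ) : ENNReal :=
  ∫⁻ x in s, ENNReal.ofReal ((u x) ^ 2)

/-- Squared Sobolev–Slobodeckij norm `‖u‖_{H^{1/2}(s)}²`. -/
noncomputable def h12Sq (u : ℝ → ℝ) (s : Set ℝ) : ENNReal :=
  l2Sq u s + sobSemiSq u s

open scoped ENNReal Finset

section Overlap

variable {α ι : Type*} [MeasurableSpace α] {μ : Measure α}

theorem finsetSum_lintegral_le_lintegral_finsetSum (t : Finset ι) (f : ι → α → ℝ≥0∞) :
    ∑ i ∈ t, ∫⁻ x, f i x ∂μ ≤ ∫⁻ x, ∑ i ∈ t, f i x ∂μ := by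
  classical
  induction t using Finset.induction_on with
  | empty => simp
  | insert i t hi ih =>
    simp only [Finset.sum_insert hi]
    exact (add_le_add_right ih _).trans (le_lintegral_add _ _)

open Classical in
theorem sum_setLIntegral_le_of_card_le {t : Finset ι} {s : ι → Set α} {S : Set α} {k : ℕ}
    (hs : ∀ i ∈ t, MeasurableSet (s i)) (hsS : ∀ i ∈ t, s i ⊆ S)
    (hk : ∀ x, #{i ∈ t | x ∈ s i} ≤ k) {g : ι → α → ℝ≥0∞} {G : α → ℝ≥0∞}
    (hgG : ∀ i ∈ t, ∀ x ∈ s i, g i x ≤ G x) :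
    ∑ i ∈ t, ∫⁻ x in s i, g i x ∂μ ≤ k * ∫⁻ x in S, G x ∂μ := by
  have hpoint : ∀ x, ∑ i ∈ t, (s i).indicator (g i) x ≤ k * G x := fun x =>
    calc ∑ i ∈ t, (s i).indicator (g i) x
        ≤ ∑ i ∈ t, (s i).indicator G x :=
          Finset.sum_le_sum fun i hi => indicator_apply_le'
            (fun hx => (hgG i hi x hx).trans_eq (indicator_of_mem hx G).symm) fun _ => zero_le
      _ = #{i ∈ t | x ∈ s i} * G x := by
          simp only [indicator_apply, ← Finset.sum_filter, Finset.sum_const, nsmul_eq_mul]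
      _ ≤ k * G x := by gcongr; exact_mod_cast hk x
  calc ∑ i ∈ t, ∫⁻ x in s i, g i x ∂μ
      = ∑ i ∈ t, ∫⁻ x in S, (s i).indicator (g i) x ∂μ := by
        refine Finset.sum_congr rfl fun i hi => ?_
        rw [lintegral_indicator (hs i hi), Measure.restrict_restrict_of_subset (hsS i hi)]
    _ ≤ ∫⁻ x in S, ∑ i ∈ t, (s i).indicator (g i) x ∂μ :=
        finsetSum_lintegral_le_lintegral_finsetSum _ _
    _ ≤ ∫⁻ x in S, k * G x ∂μ := lintegral_mono hpoint
    _ = k * ∫⁻ x in S, G x ∂μ := lintegral_const_mul' _ _ (by simp)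

end Overlap

theorem sobSemiSq_congr_ae (u : ℝ → ℝ) {s t : Set ℝ} (h : s =ᵐ[volume] t) :
    sobSemiSq u s = sobSemiSq u t := by
  simp only [sobSemiSq, Measure.restrict_congr_set h]

open Classical in
theorem sum_sobSemiSq_le_of_card_le {ι : Type*} (u : ℝ → ℝ) {t : Finset ι} {s : ι → Set ℝ}
    {S : Set ℝ} {k : ℕ} (hs : ∀ i ∈ t, MeasurableSet (s i)) (hsS : ∀ i ∈ t, s i ⊆ S)
    (hk : ∀ x, #{i ∈ t | x ∈ s i} ≤ k) :
    ∑ i ∈ t, sobSemiSq u (s i) ≤ k * sobSemiSq u S :=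
  sum_setLIntegral_le_of_card_le hs hsS hk fun i hi _ _ => lintegral_mono_set (hsS i hi)

/-- The patch `ω_j`, made half-open (a null change) so that every point lies in at most two
patches. -/
def nodePatch (z : ℕ → ℝ) (n j : ℕ) : Set ℝ :=
  Ico (z (j - 1)) (z (min (j + 1) n))

section NodePatch

variable {z : ℕ → ℝ} {n : ℕ}

theorem nodePatch_subset (hz : MonotoneOn z (Iic n)) {j : ℕ} (hj : j ≤ n) :
    nodePatch z n j ⊆ Ico (z 0) (z n) :=
  Ico_subset_Ico (hz (mem_Iic.2 n.zero_le) (mem_Iic.2 (by omega)) (Nat.zero_le _))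
    (hz (mem_Iic.2 (min_le_right _ _)) self_mem_Iic (min_le_right _ _))

theorem notMem_nodePatch_of_add_two_le (hz : MonotoneOn z (Iic n)) {x : ℝ} {j k : ℕ}
    (hk : k ≤ n) (hjk : j + 2 ≤ k) (hxj : x ∈ nodePatch z n j) : x ∉ nodePatch z n k := by
  intro hxk
  have : z (min (j + 1) n) ≤ z (k - 1) :=
    hz (mem_Iic.2 (min_le_right _ _)) (mem_Iic.2 (by omega)) (by omega)
  exact (hxj.2.trans_le this).not_ge hxk.1

open Classical in
theorem card_filter_mem_nodePatch_le_two (hz : MonotoneOn z (Iic n)) (x : ℝ) :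
    #{j ∈ Finset.range (n + 1) | x ∈ nodePatch z n j} ≤ 2 := by
  set T := {j ∈ Finset.range (n + 1) | x ∈ nodePatch z n j}
  rcases T.eq_empty_or_nonempty with hT | hT
  · simp [hT]
  obtain ⟨-, hxm⟩ := Finset.mem_filter.1 (T.min'_mem hT)
  have hsub : T ⊆ Finset.Icc (T.min' hT) (T.min' hT + 1) := by
    intro j hj
    obtain ⟨hjn, hxj⟩ := Finset.mem_filter.1 hj
    refine Finset.mem_Icc.2 ⟨T.min'_le j hj, not_lt.1 fun hlt => ?_⟩
    exact notMem_nodePatch_of_add_two_le hz (Finset.mem_range_succ_iff.1 hjn) hlt hxm hxj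
  exact (Finset.card_le_card hsub).trans_eq (by rw [Nat.card_Icc]; omega)

end NodePatch

theorem sum_patch_seminorm_le_two_h12Sq_general
    (a b : ℝ) (n : ℕ) (z : ℕ → ℝ)
    (hza : z 0 = a) (hzb : z n = b) (hz : ∀ j < n, z j < z (j + 1))
    (u : ℝ → ℝ) :
    ∑ j ∈ Finset.range (n + 1), sobSemiSq u (Icc (z (j - 1)) (z (min (j + 1) n)))
      ≤ 2 * h12Sq u (Icc a b) := by
  subst hza hzb
  have hmono : MonotoneOn z (Iic n) := (strictMonoOn_Iic_of_lt_succ hz).monotoneOn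
  calc ∑ j ∈ Finset.range (n + 1), sobSemiSq u (Icc (z (j - 1)) (z (min (j + 1) n)))
      = ∑ j ∈ Finset.range (n + 1), sobSemiSq u (nodePatch z n j) :=
        Finset.sum_congr rfl fun j _ => sobSemiSq_congr_ae u Ico_ae_eq_Icc.symm
    _ ≤ 2 * sobSemiSq u (Ico (z 0) (z n)) :=
        sum_sobSemiSq_le_of_card_le u (fun _ _ => measurableSet_Ico)
          (fun _ hj => nodePatch_subset hmono (Finset.mem_range_succ_iff.1 hj))
          (card_filter_mem_nodePatch_le_two hmono)
    _ = 2 * sobSemiSq u (Icc (z 0) (z n)) := by rw [sobSemiSq_congr_ae u Ico_ae_eq_Icc]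
    _ ≤ 2 * h12Sq u (Icc (z 0) (z n)) := by gcongr; exact le_add_self

/-- Efficiency estimate: the sum of the local Faermann seminorm contributions over
all overlapping node patches is bounded by twice the global `H^{1/2}`-norm. -/
theorem sum_patch_seminorm_le_two_h12Sq
    (a b : ℝ) (n : ℕ) (hn : 1 ≤ n) (z : ℕ → ℝ)
    (hza : z 0 = a) (hzb : z n = b) (hz : ∀ j < n, z j < z (j + 1))
    (u : ℝ → ℝ) (hu : MemLp u 2 (volume.restrict (Icc a b)))
    (hfin : h12Sq u (Icc a b) < ⊤) :
    ∑ j ∈ Finset.range (n + 1), sobSemiSq u (Icc (z (j - 1)) (z (min (j + 1) n)))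
      ≤ 2 * h12Sq u (Icc a b) :=
  sum_patch_seminorm_le_two_h12Sq_general a b n z hza hzb hz u
end

section
/- Let I ⊂ ℝ be a finite interval with positive length |I| > 0. Then for every u ∈ L²(I) it holds ‖u‖²_{L²(I)} ≤ (|I|/2) · |u|²_{H^{1/2}(I)} + (1/|I|) · | ∫_I u(t) dt |². -/
open Set MeasureTheory

/-!
Expanding the square gives `∫_I ∫_I (u x - u y)² = 2 (|I| ∫_I u² - (∫_I u)²)`. On `I` the
weight satisfies `(x - y)² ≤ |I|²`, so this double integral is at most `|I|² |u|²_{H^{1/2}(I)}`;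
dividing by `2 |I|` gives the inequality.
-/

section DoubleIntegral

variable {α : Type*} [MeasurableSpace α] {μ : Measure α} [IsFiniteMeasure μ] {u : α → ℝ}

theorem integral_const_sub_sq (hu : MemLp u 2 μ) (c : ℝ) :
    ∫ y, (c - u y) ^ 2 ∂μ = μ.real univ * c ^ 2 + ∫ y, u y ^ 2 ∂μ - 2 * c * ∫ y, u y ∂μ := by
  have hsq : Integrable (fun y => c ^ 2 + u y ^ 2) μ := (integrable_const _).add hu.integrable_sq
  have hlin : Integrable (fun y => 2 * c * u y) μ := (hu.integrable one_le_two).const_mul _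
  calc ∫ y, (c - u y) ^ 2 ∂μ = ∫ y, (c ^ 2 + u y ^ 2) - 2 * c * u y ∂μ := by
        congr 1; funext y; ring
    _ = _ := by
        rw [integral_sub hsq hlin, integral_add (integrable_const _) hu.integrable_sq,
          integral_const, integral_const_mul, smul_eq_mul]

theorem lintegral_lintegral_ofReal_sub_sq (hu : MemLp u 2 μ) :
    ∫⁻ x, ∫⁻ y, ENNReal.ofReal ((u x - u y) ^ 2) ∂μ ∂μ
      = ENNReal.ofReal (2 * (μ.real univ * ∫ x, u x ^ 2 ∂μ - (∫ x, u x ∂μ) ^ 2)) := by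
  have hu1 : Integrable u μ := hu.integrable one_le_two
  have hsub_sq : ∀ c, Integrable (fun y => (c - u y) ^ 2) μ := fun c =>
    ((memLp_const c).sub hu).integrable_sq
  have hinner : ∀ x, ∫⁻ y, ENNReal.ofReal ((u x - u y) ^ 2) ∂μ
      = ENNReal.ofReal (∫ y, (u x - u y) ^ 2 ∂μ) := fun x =>
    (ofReal_integral_eq_lintegral_ofReal (hsub_sq (u x)) (ae_of_all _ fun y => sq_nonneg _)).symm
  have hquad : Integrable (fun x => μ.real univ * u x ^ 2 + ∫ y, u y ^ 2 ∂μ) μ :=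
    (hu.integrable_sq.const_mul _).add (integrable_const _)
  have hlin : Integrable (fun x => 2 * u x * ∫ y, u y ∂μ) μ := (hu1.const_mul 2).mul_const _
  have hg_int : Integrable (fun x => ∫ y, (u x - u y) ^ 2 ∂μ) μ := by
    simp_rw [integral_const_sub_sq hu]
    exact hquad.sub hlin
  rw [lintegral_congr hinner, ← ofReal_integral_eq_lintegral_ofReal hg_int
    (ae_of_all _ fun x => integral_nonneg fun y => sq_nonneg _)]
  simp_rw [integral_const_sub_sq hu]
  rw [integral_sub hquad hlin, integral_add (hu.integrable_sq.const_mul _) (integrable_const _),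
    integral_const, integral_mul_const, integral_const_mul, integral_const_mul, smul_eq_mul]
  ring_nf

end DoubleIntegral

theorem sub_sq_le_sq_mul_div_sq (u : ℝ → ℝ) {x y d : ℝ} (h : dist x y ≤ d) :
    (u x - u y) ^ 2 ≤ d ^ 2 * ((u x - u y) ^ 2 / (x - y) ^ 2) := by
  rcases eq_or_ne x y with rfl | hxy
  · simp
  have hpos : 0 < (x - y) ^ 2 := sq_pos_of_ne_zero (sub_ne_zero.mpr hxy)
  have hle : (x - y) ^ 2 ≤ d ^ 2 := by
    rw [← sq_abs, ← Real.dist_eq]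
    exact pow_le_pow_left₀ dist_nonneg h 2
  rw [mul_div_left_comm]
  exact le_mul_of_one_le_right (sq_nonneg _) ((one_le_div hpos).mpr hle)

theorem setLIntegral_setLIntegral_ofReal_sub_sq_le {s : Set ℝ} (hs : MeasurableSet s) {d : ℝ}
    (hd : ∀ x ∈ s, ∀ y ∈ s, dist x y ≤ d) (u : ℝ → ℝ) :
    ∫⁻ x in s, ∫⁻ y in s, ENNReal.ofReal ((u x - u y) ^ 2)
      ≤ ENNReal.ofReal (d ^ 2) * sobSemiSq u s := by
  rw [sobSemiSq, ← lintegral_const_mul' _ _ ENNReal.ofReal_ne_top]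
  refine setLIntegral_mono' hs fun x hx => ?_
  rw [← lintegral_const_mul' _ _ ENNReal.ofReal_ne_top]
  refine setLIntegral_mono' hs fun y hy => ?_
  rw [← ENNReal.ofReal_mul (sq_nonneg d)]
  exact ENNReal.ofReal_le_ofReal (sub_sq_le_sq_mul_div_sq u (hd x hx y hy))

theorem ENNReal.ofReal_le_of_ofReal_two_mul_sub_sq_le {L C T : ℝ} {S : ENNReal} (hL : 0 < L)
    (h : ENNReal.ofReal (2 * (L * C - T ^ 2)) ≤ ENNReal.ofReal (L ^ 2) * S) :
    ENNReal.ofReal C ≤ ENNReal.ofReal (L / 2) * S + ENNReal.ofReal (1 / L * T ^ 2) := by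
  have h2L : ENNReal.ofReal (2 * L) ≠ 0 := (ENNReal.ofReal_pos.mpr (by positivity)).ne'
  have hmain : ENNReal.ofReal (C - 1 / L * T ^ 2) ≤ ENNReal.ofReal (L / 2) * S := by
    rw [← ENNReal.mul_le_mul_iff_right h2L ENNReal.ofReal_ne_top]
    calc ENNReal.ofReal (2 * L) * ENNReal.ofReal (C - 1 / L * T ^ 2)
        = ENNReal.ofReal (2 * (L * C - T ^ 2)) := by
          rw [← ENNReal.ofReal_mul (by positivity)]
          congr 1
          field_simp
      _ ≤ ENNReal.ofReal (L ^ 2) * S := h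
      _ = ENNReal.ofReal (2 * L) * (ENNReal.ofReal (L / 2) * S) := by
          rw [← mul_assoc, ← ENNReal.ofReal_mul (by positivity)]
          congr 2
          ring
  calc ENNReal.ofReal C = ENNReal.ofReal (C - 1 / L * T ^ 2 + 1 / L * T ^ 2) := by
        rw [sub_add_cancel]
    _ ≤ ENNReal.ofReal (C - 1 / L * T ^ 2) + ENNReal.ofReal (1 / L * T ^ 2) :=
        ENNReal.ofReal_add_le
    _ ≤ ENNReal.ofReal (L / 2) * S + ENNReal.ofReal (1 / L * T ^ 2) := by gcongr

/-- Poincaré-type inequality on a finite interval (Lemma 3.4). -/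
theorem poincare_type_inequality
    (a b : ℝ) (hab : a < b) (u : ℝ → ℝ)
    (hu : MemLp u 2 (volume.restrict (Icc a b))) :
    l2Sq u (Icc a b)
      ≤ ENNReal.ofReal ((b - a) / 2) * sobSemiSq u (Icc a b)
        + ENNReal.ofReal ((1 / (b - a)) * (∫ t in Icc a b, u t) ^ 2) := by
  have hvol : (volume.restrict (Icc a b)).real univ = b - a := by
    simp [measureReal_def, Real.volume_Icc, hab.le]
  have hl2 : l2Sq u (Icc a b) = ENNReal.ofReal (∫ x in Icc a b, u x ^ 2) :=
    (ofReal_integral_eq_lintegral_ofReal hu.integrable_sq (ae_of_all _ fun _ => sq_nonneg _)).symm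
  have hdouble := lintegral_lintegral_ofReal_sub_sq hu
  rw [hvol] at hdouble
  rw [hl2]
  refine ENNReal.ofReal_le_of_ofReal_two_mul_sub_sq_le (sub_pos.mpr hab) ?_
  rw [← hdouble]
  exact setLIntegral_setLIntegral_ofReal_sub_sq_le measurableSet_Icc
    (fun x hx y hy => Real.dist_le_of_mem_Icc hx hy) u
end

section
/- Let I ⊂ ℝ be a finite interval with |I| > 0, let q ∈ (0,1], and let ψ ∈ L²(I) satisfy ‖1 − ψ‖²_{L²(I)} ≤ (1 − q)|I|. If u ∈ L²(I) satisfies the orthogonality ∫_I u(t) ψ(t) dt = 0, then ‖u‖²_{L²(I)} ≤ (|I| / (2q)) · |u|²_{H^{1/2}(I)}. -/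
/-!
Expanding the square gives `∫_I ∫_I (u x - u y)² = 2 |I| ‖u‖² - 2 (∫_I u)²`, and since
`|x - y| ≤ |I|` on `I` the left side is at most `|I|² |u|²_{H^{1/2}(I)}`; this is the Poincaré
inequality `|I| ‖u‖² ≤ (|I|²/2) |u|²_{H^{1/2}(I)} + (∫_I u)²`. Orthogonality rewrites `∫_I u` as
`∫_I u (1 - ψ)`, whose square is at most `(1 - q) |I| ‖u‖²` by Cauchy–Schwarz and the mass
condition; absorbing it into the left side leaves `q |I| ‖u‖² ≤ (|I|²/2) |u|²_{H^{1/2}(I)}`.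
-/

open Set MeasureTheory

namespace MeasureTheory

variable {α : Type*} [MeasurableSpace α] {μ : Measure α}

theorem MemLp.sq_integral_mul_le {f g : α → ℝ} (hf : MemLp f 2 μ) (hg : MemLp g 2 μ) :
    (∫ x, f x * g x ∂μ) ^ 2 ≤ (∫ x, f x ^ 2 ∂μ) * ∫ x, g x ^ 2 ∂μ := by
  have inner_toLp : ∀ {f g : α → ℝ} (hf : MemLp f 2 μ) (hg : MemLp g 2 μ),
      inner ℝ (hf.toLp f) (hg.toLp g) = ∫ x, f x * g x ∂μ := by
    intro f g hf hg
    rw [L2.inner_def]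
    refine integral_congr_ae ?_
    filter_upwards [hf.coeFn_toLp, hg.coeFn_toLp] with x hfx hgx
    rw [hfx, hgx, Real.inner_apply]
  have hcs := real_inner_mul_inner_self_le (hf.toLp f) (hg.toLp g)
  simp only [inner_toLp] at hcs
  simpa [sq] using hcs

theorem MemLp.integral_prod_sub_sq [IsFiniteMeasure μ] {u : α → ℝ} (hu : MemLp u 2 μ) :
    ∫ p, (u p.1 - u p.2) ^ 2 ∂μ.prod μ =
      2 * (μ.real univ * ∫ x, u x ^ 2 ∂μ - (∫ x, u x ∂μ) ^ 2) := by
  have hu1 : Integrable u μ := hu.integrable one_le_two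
  have hsq : Integrable (fun x => u x ^ 2) μ := hu.integrable_sq
  have h1 : Integrable (fun p : α × α => u p.1 ^ 2 * 1) (μ.prod μ) :=
    hsq.mul_prod (integrable_const 1)
  have h2 : Integrable (fun p : α × α => 2 * (u p.1 * u p.2)) (μ.prod μ) :=
    (hu1.mul_prod hu1).const_mul 2
  have h3 : Integrable (fun p : α × α => 1 * u p.2 ^ 2) (μ.prod μ) :=
    (integrable_const 1).mul_prod hsq
  calc ∫ p, (u p.1 - u p.2) ^ 2 ∂μ.prod μ
      = ∫ p, (u p.1 ^ 2 * 1 - 2 * (u p.1 * u p.2) + 1 * u p.2 ^ 2) ∂μ.prod μ := by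
        congr 1; ext p; ring
    _ = _ := by
        have h12 : Integrable (fun p : α × α => u p.1 ^ 2 * 1 - 2 * (u p.1 * u p.2)) (μ.prod μ) :=
          h1.sub h2
        rw [integral_add h12 h3, integral_sub h1 h2, integral_const_mul,
          integral_prod_mul (fun x => u x ^ 2) (fun _ => (1 : ℝ)), integral_prod_mul u u,
          integral_prod_mul (fun _ => (1 : ℝ)) (fun y => u y ^ 2), integral_const, smul_eq_mul,
          mul_one]
        ring

theorem MemLp.lintegral_lintegral_sub_sq [IsFiniteMeasure μ] {u : α → ℝ} (hu : MemLp u 2 μ) :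
    ∫⁻ x, ∫⁻ y, ENNReal.ofReal ((u x - u y) ^ 2) ∂μ ∂μ =
      ENNReal.ofReal (2 * (μ.real univ * ∫ x, u x ^ 2 ∂μ - (∫ x, u x ∂μ) ^ 2)) := by
  have hdiff : MemLp (fun p : α × α => u p.1 - u p.2) 2 (μ.prod μ) :=
    (hu.comp_fst μ).sub (hu.comp_snd μ)
  rw [← hu.integral_prod_sub_sq, ofReal_integral_eq_lintegral_ofReal hdiff.integrable_sq
    (ae_of_all _ fun p => sq_nonneg _),
    lintegral_prod _ (hdiff.1.aemeasurable.pow_const 2).ennreal_ofReal]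

end MeasureTheory

theorem sq_sub_le_mul_div_sq (u : ℝ → ℝ) {x y d : ℝ} (hxy : |x - y| ≤ d) :
    (u x - u y) ^ 2 ≤ d ^ 2 * ((u x - u y) ^ 2 / (x - y) ^ 2) := by
  rcases eq_or_ne x y with rfl | hne
  · simp
  have hpos : 0 < (x - y) ^ 2 := by positivity [sub_ne_zero.mpr hne]
  have hsq : (x - y) ^ 2 ≤ d ^ 2 := sq_le_sq' (abs_le.mp hxy).1 (abs_le.mp hxy).2
  rw [mul_div_assoc', le_div_iff₀ hpos]
  nlinarith [mul_le_mul_of_nonneg_left hsq (sq_nonneg (u x - u y))]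

theorem l2Sq_eq_ofReal_integral {u : ℝ → ℝ} {s : Set ℝ} (hu : MemLp u 2 (volume.restrict s)) :
    l2Sq u s = ENNReal.ofReal (∫ x in s, u x ^ 2) :=
  (ofReal_integral_eq_lintegral_ofReal hu.integrable_sq (ae_of_all _ fun _ => sq_nonneg _)).symm

section BoundedDiameter

variable {s : Set ℝ} {d : ℝ}

theorem lintegral_lintegral_sub_sq_le_mul_sobSemiSq (hs : MeasurableSet s)
    (hd : ∀ x ∈ s, ∀ y ∈ s, |x - y| ≤ d) (u : ℝ → ℝ) :
    ∫⁻ x in s, ∫⁻ y in s, ENNReal.ofReal ((u x - u y) ^ 2) ≤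
      ENNReal.ofReal (d ^ 2) * sobSemiSq u s := by
  rw [sobSemiSq, ← lintegral_const_mul' _ _ ENNReal.ofReal_ne_top]
  refine setLIntegral_mono' hs fun x hx => ?_
  rw [← lintegral_const_mul' _ _ ENNReal.ofReal_ne_top]
  refine setLIntegral_mono' hs fun y hy => ?_
  rw [← ENNReal.ofReal_mul (sq_nonneg d)]
  exact ENNReal.ofReal_le_ofReal (sq_sub_le_mul_div_sq u (hd x hx y hy))

theorem volume_real_mul_integral_sq_le (hs : MeasurableSet s)
    (hd : ∀ x ∈ s, ∀ y ∈ s, |x - y| ≤ d) {u : ℝ → ℝ} (hu : MemLp u 2 (volume.restrict s))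
    (hsob : sobSemiSq u s ≠ ⊤) :
    volume.real s * ∫ x in s, u x ^ 2 ≤
      d ^ 2 / 2 * (sobSemiSq u s).toReal + (∫ x in s, u x) ^ 2 := by
  have : IsFiniteMeasure (volume.restrict s) :=
    isFiniteMeasure_restrict.mpr (Metric.isBounded_iff.mpr ⟨d, hd⟩).measure_lt_top.ne
  have hdiff := lintegral_lintegral_sub_sq_le_mul_sobSemiSq hs hd u
  rw [hu.lintegral_lintegral_sub_sq, ← ENNReal.ofReal_toReal hsob,
    ← ENNReal.ofReal_mul (sq_nonneg d), ENNReal.ofReal_le_ofReal_iff (by positivity),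
    measureReal_restrict_apply_univ] at hdiff
  linarith

end BoundedDiameter

/-- Local `L²` bound from orthogonality against a bump function `ψ` with mass
condition `‖1 − ψ‖²_{L²(I)} ≤ (1 − q)|I|` (key step in Lemma 3.5). -/
theorem l2_bound_of_orthogonality
    (a b : ℝ) (hab : a < b) (q : ℝ) (hq0 : 0 < q) (hq1 : q ≤ 1)
    (ψ : ℝ → ℝ) (hψ : MemLp ψ 2 (volume.restrict (Icc a b)))
    (hmass : l2Sq (fun t => 1 - ψ t) (Icc a b) ≤ ENNReal.ofReal ((1 - q) * (b - a)))
    (u : ℝ → ℝ) (hu : MemLp u 2 (volume.restrict (Icc a b)))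
    (horth : (∫ t in Icc a b, u t * ψ t) = 0) :
    l2Sq u (Icc a b) ≤ ENNReal.ofReal ((b - a) / (2 * q)) * sobSemiSq u (Icc a b) := by
  have hI : 0 < b - a := sub_pos.mpr hab
  rcases eq_or_ne (sobSemiSq u (Icc a b)) ⊤ with hsob | hsob
  · rw [hsob, ENNReal.mul_top (ENNReal.ofReal_pos.mpr (by positivity)).ne']
    exact le_top
  have h1ψ : MemLp (fun t => 1 - ψ t) 2 (volume.restrict (Icc a b)) := (memLp_const 1).sub hψ
  have hpoincare := volume_real_mul_integral_sq_le measurableSet_Icc (d := b - a)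
    (fun x hx y hy => abs_sub_le_iff.mpr ⟨by linarith [hx.2, hy.1], by linarith [hx.1, hy.2]⟩)
    hu hsob
  rw [Real.volume_real_Icc_of_le hab.le] at hpoincare
  have hmean : ∫ t in Icc a b, u t = ∫ t in Icc a b, u t * (1 - ψ t) := by
    simp_rw [mul_one_sub]
    have huψ : Integrable (fun t => u t * ψ t) (volume.restrict (Icc a b)) := hu.integrable_mul hψ
    rw [integral_sub (hu.integrable one_le_two) huψ, horth, sub_zero]
  have hmass_real : ∫ t in Icc a b, (1 - ψ t) ^ 2 ≤ (1 - q) * (b - a) := by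
    rwa [l2Sq_eq_ofReal_integral h1ψ, ENNReal.ofReal_le_ofReal_iff (by nlinarith)] at hmass
  have hcs := hu.sq_integral_mul_le h1ψ
  rw [← hmean] at hcs
  have hM : 0 ≤ ∫ t in Icc a b, u t ^ 2 := integral_nonneg fun _ => sq_nonneg _
  rw [l2Sq_eq_ofReal_integral hu, ← ENNReal.ofReal_toReal hsob,
    ← ENNReal.ofReal_mul (by positivity)]
  refine ENNReal.ofReal_le_ofReal ?_
  rw [div_mul_eq_mul_div, le_div_iff₀ (by positivity)]
  nlinarith [mul_le_mul_of_nonneg_left hmass_real hM]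
end

section
/- Let 𝒦 = (t_i)_{i∈ℤ} be a bi-infinite nondecreasing real knot sequence with t_i → ±∞ as i → ±∞, and let 𝒲 = (w_i)_{i∈ℤ} be positive weights. For each ℓ ∈ ℕ let 𝒦_ℓ = (t_{i,ℓ})_{i∈ℤ} be a bi-infinite nondecreasing knot sequence with t_{i,ℓ} → ±∞ as i → ±∞ such that the multiplicity pattern is preserved (for all i, j ∈ ℤ: t_{i,ℓ} = t_{j,ℓ} if and only if t_i = t_j), and let 𝒲_ℓ = (w_{i,ℓ})_{i∈ℤ} be positive weights. If t_{i,ℓ} → t_i and w_{i,ℓ} → w_i as ℓ → ∞ for every i ∈ ℤ, then for every p ∈ ℕ₀ and every i ∈ ℤ, the NURBS R_{i,p}^{𝒦_ℓ, 𝒲_ℓ} converge to R_{i,p}^{𝒦, 𝒲} Lebesgue-almost everywhere on ℝ. -/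
/-!
Away from the knots of the limit sequence, which form a countable and hence null set, every
B-spline converges pointwise. By induction on the degree: the indicator
`χ_[t_{i-1}, t_i)(x)` is eventually constant once `x` is not a knot, and the coefficients `β`
converge because the preserved multiplicity pattern makes the case distinction
`t_i = t_{i+p}` the same along the whole sequence. Near such `x` only a fixed finite window
of indices contributes to the denominators, and the limit denominator is positive by the
partition of unity `∑ ℓ, B_{ℓ,p} = 1` and the positivity of the weights.
-/

open Set Filter

noncomputable def bsBeta (t : ℤ → ℝ) (i : ℤ) (p : ℕ) (x : ℝ) : ℝ :=
  if t i = t (i + p) then 0 else (x - t i) / (t (i + p) - t i)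

noncomputable def Bspline (t : ℤ → ℝ) : ℕ → ℤ → ℝ → ℝ
  | 0, i, x => if x ∈ Set.Ico (t (i - 1)) (t i) then 1 else 0
  | p + 1, i, x => bsBeta t (i - 1) (p + 1) x * Bspline t p i x
      + (1 - bsBeta t i (p + 1) x) * Bspline t p (i + 1) x

noncomputable def nurbs (t : ℤ → ℝ) (w : ℤ → ℝ) (p : ℕ) (i : ℤ) (x : ℝ) : ℝ :=
  w i * Bspline t p i x / ∑ᶠ ℓ : ℤ, w ℓ * Bspline t p ℓ x

open Function Topology

theorem eventually_lt_iff_of_tendsto {β α : Type*} [LinearOrder α] [TopologicalSpace α]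
    [OrderTopology α] {l : Filter β} {u : β → α} {c x : α} (hu : Tendsto u l (𝓝 c))
    (hx : c ≠ x) : ∀ᶠ n in l, (x < u n ↔ x < c) := by
  rcases hx.lt_or_gt with h | h
  · filter_upwards [hu.eventually (eventually_lt_nhds h)] with n hn
    exact iff_of_false (lt_asymm hn) (lt_asymm h)
  · filter_upwards [hu.eventually (eventually_gt_nhds h)] with n hn
    exact iff_of_true hn h

section

variable {t : ℤ → ℝ}

theorem bsBeta_mem_Icc {i : ℤ} {p : ℕ} {x : ℝ} (hx : x ∈ Icc (t i) (t (i + p))) :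
    bsBeta t i p x ∈ Icc 0 1 := by
  unfold bsBeta
  split_ifs with h
  · simp
  · have hpos : 0 < t (i + p) - t i := sub_pos.2 ((hx.1.trans hx.2).lt_of_ne h)
    rw [mem_Icc, div_nonneg_iff, div_le_one hpos]
    refine ⟨Or.inl ⟨sub_nonneg.2 hx.1, hpos.le⟩, ?_⟩
    linarith [hx.2]

theorem mem_Ico_of_Bspline_ne_zero (hmono : Monotone t) {p : ℕ} {i : ℤ} {x : ℝ}
    (h : Bspline t p i x ≠ 0) : x ∈ Ico (t (i - 1)) (t (i + p)) := by
  induction p generalizing i with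
  | zero =>
    simp only [Bspline, ne_eq, ite_eq_right_iff, not_forall] at h
    simpa using h.1
  | succ p ih =>
    simp only [Bspline] at h
    by_cases hi : Bspline t p i x = 0
    · have hi1 : Bspline t p (i + 1) x ≠ 0 := fun h' => h (by simp [hi, h'])
      obtain ⟨hl, hr⟩ := ih hi1
      exact ⟨(hmono (by omega)).trans hl, hr.trans_le (hmono (by push_cast; omega))⟩
    · obtain ⟨hl, hr⟩ := ih hi
      exact ⟨hl, hr.trans_le (hmono (by push_cast; omega))⟩

theorem Bspline_nonneg (hmono : Monotone t) (p : ℕ) (i : ℤ) (x : ℝ) :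
    0 ≤ Bspline t p i x := by
  induction p generalizing i with
  | zero =>
    simp only [Bspline]
    split_ifs <;> norm_num
  | succ p ih =>
    have hleft : 0 ≤ bsBeta t (i - 1) (p + 1) x * Bspline t p i x := by
      rcases eq_or_ne (Bspline t p i x) 0 with h | h
      · simp [h]
      · obtain ⟨hl, hr⟩ := mem_Ico_of_Bspline_ne_zero hmono h
        have hx : x ∈ Icc (t (i - 1)) (t (i - 1 + (p + 1 : ℕ))) := by
          rw [show i - 1 + ((p + 1 : ℕ) : ℤ) = i + p by push_cast; ring]
          exact Ico_subset_Icc_self ⟨hl, hr⟩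
        exact mul_nonneg (bsBeta_mem_Icc hx).1 (ih i)
    have hright : 0 ≤ (1 - bsBeta t i (p + 1) x) * Bspline t p (i + 1) x := by
      rcases eq_or_ne (Bspline t p (i + 1) x) 0 with h | h
      · simp [h]
      · obtain ⟨hl, hr⟩ := mem_Ico_of_Bspline_ne_zero hmono h
        have hx : x ∈ Icc (t i) (t (i + (p + 1 : ℕ))) := by
          rw [show i + ((p + 1 : ℕ) : ℤ) = i + 1 + p by push_cast; ring]
          exact ⟨by simpa using hl, hr.le⟩
        exact mul_nonneg (sub_nonneg.2 (bsBeta_mem_Icc hx).2) (ih (i + 1))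
    exact add_nonneg hleft hright

theorem support_Bspline_subset_Icc (hmono : Monotone t) {p : ℕ} {x : ℝ} {a b : ℤ}
    (ha : t a < x) (hb : x < t b) :
    support (fun ℓ => Bspline t p ℓ x) ⊆ Icc (a - p) b := by
  intro ℓ hℓ
  obtain ⟨hl, hr⟩ := mem_Ico_of_Bspline_ne_zero hmono hℓ
  constructor
  · by_contra hc
    exact (hmono (by omega : ℓ + p ≤ a)).not_gt (ha.trans hr)
  · by_contra hc
    exact (hmono (by omega : b ≤ ℓ - 1)).not_gt (hl.trans_lt hb)

theorem hasFiniteSupport_Bspline (hmono : Monotone t) (htop : Tendsto t atTop atTop)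
    (hbot : Tendsto t atBot atBot) (p : ℕ) (x : ℝ) :
    HasFiniteSupport fun ℓ => Bspline t p ℓ x := by
  obtain ⟨a, ha⟩ := (hbot.eventually (eventually_lt_atBot x)).exists
  obtain ⟨b, hb⟩ := (htop.eventually (eventually_gt_atTop x)).exists
  exact (finite_Icc _ _).subset (support_Bspline_subset_Icc hmono ha hb)

theorem finsum_Bspline_zero (hmono : Monotone t) (htop : Tendsto t atTop atTop)
    (hbot : Tendsto t atBot atBot) (x : ℝ) : ∑ᶠ ℓ, Bspline t 0 ℓ x = 1 := by
  obtain ⟨a, ha⟩ := (hbot.eventually (eventually_le_atBot x)).exists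
  obtain ⟨b, hb⟩ := (htop.eventually (eventually_gt_atTop x)).exists
  -- the unique nonzero term is at the first knot to the right of `x`
  obtain ⟨k, hk, hmin⟩ := Int.exists_least_of_bdd (P := fun ℓ => x < t ℓ)
    ⟨a, fun ℓ hℓ => by_contra fun h => (hmono (not_le.1 h).le).not_gt (ha.trans_lt hℓ)⟩
    ⟨b, hb⟩
  have hk1 : t (k - 1) ≤ x := not_lt.1 fun h => by linarith [hmin _ h]
  rw [finsum_eq_single _ k fun ℓ hℓ => ?_]
  · simp [Bspline, hk1, hk]
  · rcases hℓ.lt_or_gt with h | h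
    · simp [Bspline, not_lt.1 fun h' => (hmin ℓ h').not_gt h]
    · simp [Bspline, (hk.trans_le (hmono (by omega : k ≤ ℓ - 1))).not_ge]

theorem finsum_Bspline_succ {p : ℕ} {x : ℝ} (hfin : HasFiniteSupport fun ℓ => Bspline t p ℓ x) :
    ∑ᶠ ℓ, Bspline t (p + 1) ℓ x = ∑ᶠ ℓ, Bspline t p ℓ x := by
  let f : ℤ → ℝ := fun ℓ => bsBeta t (ℓ - 1) (p + 1) x * Bspline t p ℓ x
  let g : ℤ → ℝ := fun ℓ => (1 - bsBeta t (ℓ - 1) (p + 1) x) * Bspline t p ℓ x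
  have hf : HasFiniteSupport f := hfin.fun_mul_right _
  have hg : HasFiniteSupport g := hfin.fun_mul_right _
  have hrec : ∀ ℓ, Bspline t (p + 1) ℓ x = f ℓ + g (ℓ + 1) := fun ℓ => by simp [Bspline, f, g]
  -- the second half of the recursion is the first half's complement, shifted by one index
  calc ∑ᶠ ℓ, Bspline t (p + 1) ℓ x
      = ∑ᶠ ℓ, f ℓ + ∑ᶠ ℓ, g (ℓ + 1) := by
        simp only [hrec]
        exact finsum_add_distrib hf (hg.fun_comp_of_injective (add_left_injective 1))
    _ = ∑ᶠ ℓ, (f ℓ + g ℓ) := by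
        rw [finsum_add_distrib hf hg]
        exact congrArg _ (finsum_comp_equiv (Equiv.addRight 1))
    _ = ∑ᶠ ℓ, Bspline t p ℓ x := finsum_congr fun ℓ => by simp only [f, g]; ring

theorem finsum_Bspline_eq_one (hmono : Monotone t) (htop : Tendsto t atTop atTop)
    (hbot : Tendsto t atBot atBot) (p : ℕ) (x : ℝ) : ∑ᶠ ℓ, Bspline t p ℓ x = 1 := by
  induction p with
  | zero => exact finsum_Bspline_zero hmono htop hbot x
  | succ p ih => rw [finsum_Bspline_succ (hasFiniteSupport_Bspline hmono htop hbot p x), ih]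

section Convergence

variable {ι : Type*} {l : Filter ι} {tseq : ι → ℤ → ℝ}

theorem tendsto_bsBeta (hmult : ∀ n i j, tseq n i = tseq n j ↔ t i = t j)
    (htconv : ∀ i, Tendsto (fun n => tseq n i) l (𝓝 (t i))) (i : ℤ) (p : ℕ) (x : ℝ) :
    Tendsto (fun n => bsBeta (tseq n) i p x) l (𝓝 (bsBeta t i p x)) := by
  by_cases he : t i = t (i + p)
  · have hseq : ∀ n, tseq n i = tseq n (i + p) := fun n => (hmult n i (i + p)).2 he
    simp only [bsBeta, he, hseq, if_true]
    exact tendsto_const_nhds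
  · have hseq : ∀ n, tseq n i ≠ tseq n (i + p) := fun n h => he ((hmult n i (i + p)).1 h)
    simp only [bsBeta, he, hseq, if_false]
    exact (tendsto_const_nhds.sub (htconv i)).div ((htconv (i + p)).sub (htconv i))
      (sub_ne_zero.2 (Ne.symm he))

theorem tendsto_Bspline (hmult : ∀ n i j, tseq n i = tseq n j ↔ t i = t j)
    (htconv : ∀ i, Tendsto (fun n => tseq n i) l (𝓝 (t i))) {x : ℝ} (hx : x ∉ range t)
    (p : ℕ) (i : ℤ) : Tendsto (fun n => Bspline (tseq n) p i x) l (𝓝 (Bspline t p i x)) := by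
  induction p generalizing i with
  | zero =>
    have hknot : ∀ j, t j ≠ x := fun j h => hx ⟨j, h⟩
    refine tendsto_const_nhds.congr' ?_
    filter_upwards [eventually_lt_iff_of_tendsto (htconv (i - 1)) (hknot _),
      eventually_lt_iff_of_tendsto (htconv i) (hknot _)] with n h₁ h₂
    simp only [Bspline, mem_Ico, ← not_lt, h₁, h₂]
  | succ p ih =>
    exact ((tendsto_bsBeta hmult htconv _ _ x).mul (ih i)).add
      ((tendsto_const_nhds.sub (tendsto_bsBeta hmult htconv _ _ x)).mul (ih (i + 1)))

theorem finsum_mul_Bspline_eq_sum (hmono : Monotone t) {p : ℕ} {x : ℝ} {a b : ℤ}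
    (ha : t a < x) (hb : x < t b) (w : ℤ → ℝ) :
    ∑ᶠ ℓ, w ℓ * Bspline t p ℓ x = ∑ ℓ ∈ Finset.Icc (a - p) b, w ℓ * Bspline t p ℓ x :=
  finsum_eq_sum_of_support_subset _ <| by
    rw [Finset.coe_Icc]
    exact (support_mul_subset_right _ _).trans (support_Bspline_subset_Icc hmono ha hb)

theorem finsum_mul_Bspline_pos (hmono : Monotone t) (htop : Tendsto t atTop atTop)
    (hbot : Tendsto t atBot atBot) {w : ℤ → ℝ} (hw : ∀ i, 0 < w i) (p : ℕ) (x : ℝ) :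
    0 < ∑ᶠ ℓ, w ℓ * Bspline t p ℓ x := by
  obtain ⟨k, hk⟩ : ∃ k, Bspline t p k x ≠ 0 := by
    by_contra! h
    simpa [h] using finsum_Bspline_eq_one hmono htop hbot p x
  exact finsum_pos (fun ℓ => mul_nonneg (hw ℓ).le (Bspline_nonneg hmono p ℓ x))
    ⟨k, mul_pos (hw k) ((Bspline_nonneg hmono p k x).lt_of_ne' hk)⟩
    ((hasFiniteSupport_Bspline hmono htop hbot p x).fun_mul_right _)

theorem tendsto_finsum_mul_Bspline (hmono : Monotone t) (hmonoSeq : ∀ n, Monotone (tseq n))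
    (htop : Tendsto t atTop atTop) (hbot : Tendsto t atBot atBot)
    (hmult : ∀ n i j, tseq n i = tseq n j ↔ t i = t j)
    (htconv : ∀ i, Tendsto (fun n => tseq n i) l (𝓝 (t i)))
    {w : ℤ → ℝ} {wseq : ι → ℤ → ℝ} (hwconv : ∀ i, Tendsto (fun n => wseq n i) l (𝓝 (w i)))
    {x : ℝ} (hx : x ∉ range t) (p : ℕ) :
    Tendsto (fun n => ∑ᶠ ℓ, wseq n ℓ * Bspline (tseq n) p ℓ x) l
      (𝓝 (∑ᶠ ℓ, w ℓ * Bspline t p ℓ x)) := by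
  obtain ⟨a, ha⟩ := (hbot.eventually (eventually_lt_atBot x)).exists
  obtain ⟨b, hb⟩ := (htop.eventually (eventually_gt_atTop x)).exists
  rw [finsum_mul_Bspline_eq_sum hmono ha hb]
  refine (tendsto_finsetSum _ fun ℓ _ =>
    (hwconv ℓ).mul (tendsto_Bspline hmult htconv hx p ℓ)).congr' ?_
  filter_upwards [(htconv a).eventually (eventually_lt_nhds ha),
    (htconv b).eventually (eventually_gt_nhds hb)] with n han hbn
  exact (finsum_mul_Bspline_eq_sum (hmonoSeq n) han hbn _).symm

end Convergence

end

theorem nurbs_ae_convergence_general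
    (t : ℤ → ℝ) (hmono : Monotone t)
    (htop : Tendsto t atTop atTop) (hbot : Tendsto t atBot atBot)
    (w : ℤ → ℝ) (hw : ∀ i, 0 < w i)
    (tseq : ℕ → ℤ → ℝ) (hmonoSeq : ∀ ℓ, Monotone (tseq ℓ))
    (hmult : ∀ ℓ (i j : ℤ), tseq ℓ i = tseq ℓ j ↔ t i = t j)
    (wseq : ℕ → ℤ → ℝ)
    (htconv : ∀ i, Tendsto (fun ℓ => tseq ℓ i) atTop (nhds (t i)))
    (hwconv : ∀ i, Tendsto (fun ℓ => wseq ℓ i) atTop (nhds (w i)))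
    (p : ℕ) (i : ℤ) :
    ∀ᵐ x : ℝ, Tendsto (fun ℓ => nurbs (tseq ℓ) (wseq ℓ) p i x) atTop
      (nhds (nurbs t w p i x)) := by
  filter_upwards [(countable_range t).ae_notMem _] with x hx
  exact ((hwconv i).mul (tendsto_Bspline hmult htconv hx p i)).div
    (tendsto_finsum_mul_Bspline hmono hmonoSeq htop hbot hmult htconv hwconv hx p)
    (finsum_mul_Bspline_pos hmono htop hbot hw p x).ne'

/-- Lemma 4.2 (ix): if the knots converge pointwise preserving the multiplicity
pattern and the weights converge pointwise, then the NURBS converge almost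
everywhere. -/
theorem nurbs_ae_convergence
    (t : ℤ → ℝ) (hmono : Monotone t)
    (htop : Tendsto t atTop atTop) (hbot : Tendsto t atBot atBot)
    (w : ℤ → ℝ) (hw : ∀ i, 0 < w i)
    (tseq : ℕ → ℤ → ℝ) (hmonoSeq : ∀ ℓ, Monotone (tseq ℓ))
    (htopSeq : ∀ ℓ, Tendsto (tseq ℓ) atTop atTop)
    (hbotSeq : ∀ ℓ, Tendsto (tseq ℓ) atBot atBot)
    (hmult : ∀ ℓ (i j : ℤ), tseq ℓ i = tseq ℓ j ↔ t i = t j)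
    (wseq : ℕ → ℤ → ℝ) (hwSeq : ∀ ℓ i, 0 < wseq ℓ i)
    (htconv : ∀ i, Tendsto (fun ℓ => tseq ℓ i) atTop (nhds (t i)))
    (hwconv : ∀ i, Tendsto (fun ℓ => wseq ℓ i) atTop (nhds (w i)))
    (p : ℕ) (i : ℤ) :
    ∀ᵐ x : ℝ, Tendsto (fun ℓ => nurbs (tseq ℓ) (wseq ℓ) p i x) atTop
      (nhds (nurbs t w p i x)) :=
  nurbs_ae_convergence_general t hmono htop hbot w hw tseq hmonoSeq hmult wseq htconv hwconv p i
end

section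
/- Let I ⊂ ℝ be a compact interval with nonempty interior, let κ_max ≥ 1, let 0 < w_min ≤ w_max be real numbers, let p ∈ ℕ₀, and let φ : I → ℝ be a piecewise continuously differentiable function with positive infimum (i.e., there exist finitely many points partitioning I such that φ agrees on each open subpiece with a function that is C¹ on the corresponding closed subpiece, and inf_I φ > 0). Then there exists a constant q ∈ (0,1], depending only on κ_max, w_min, w_max, p and φ, with the following property: for all knots t_0 ≤ t_1 ≤ … ≤ t_{3p+1} in I whose distinct values ž_0 < … < ž_m satisfy κ(t_0,…,t_{3p+1}) := max{ (ž_{j+1}−ž_j)/(ž_j−ž_{j−1}), (ž_j−ž_{j−1})/(ž_{j+1}−ž_j) : j = 1,…,m−1 } ≤ κ_max, for all weights w_1, …, w_{2p+1} ∈ [w_min, w_max], and for all ℓ ∈ {p+1, …, 2p+1}, it holds ‖(1 − R(·|t_0,…,t_{3p+1}, w_1,…,w_{2p+1})) · φ‖_{L¹([t_{ℓ−1}, t_ℓ])} ≤ (1 − q) ‖φ‖_{L¹([t_{ℓ−1}, t_ℓ])}. -/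
/-!
On the element `[t_{ℓ-1}, t_ℓ]` the mesh-ratio bound makes every knot span comparable to the
element length, so along the Cox–de Boor recursion one can always follow a term whose
coefficient is at least a fixed `c > 0`; hence `B_{p+1,p} ≥ c ^ p` on the middle half of the
element. Nonnegativity and the partition of unity give `0 ≤ R ≤ 1`, and bounded weights turn
the B-spline bound into `R ≥ r > 0` on the middle half. Thus
`|(1 - R) φ| ≤ |φ| - r 𝟙_{middle} |φ|`, and as `ε ≤ φ ≤ C` (a piecewise continuous function on
a compact interval is bounded), the middle half carries at least the fraction `ε / (2 C)` of
`∫ |φ|` over the element.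
-/

open Set MeasureTheory

/-- The NURBS `R(·|t_0,…,t_{3p+1}, w_1,…,w_{2p+1})` determined by `3p+2` knots
(at indices `0,…,3p+1`) and `2p+1` weights (at indices `1,…,2p+1`); i.e.
`R_{p+1,p}` for any extension of the given knots/weights to a bi-infinite
sequence (by locality, the definition does not depend on the extension). -/
noncomputable def RlocNurbs (p : ℕ) (t : ℕ → ℝ) (w : ℕ → ℝ) : ℝ → ℝ :=
  nurbs
    (fun j : ℤ =>
      if j < 0 then t 0 + (j : ℝ)
      else if (3 * p + 1 : ℤ) < j then t (3 * p + 1) + ((j - (3 * p + 1) : ℤ) : ℝ)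
      else t j.toNat)
    (fun j : ℤ => if 1 ≤ j ∧ j ≤ (2 * p + 1 : ℤ) then w j.toNat else 1)
    p (p + 1)


open Filter

section Bspline

variable {t : ℤ → ℝ} {x : ℝ}

lemma bsBeta_nonneg (ht : Monotone t) {i : ℤ} {k : ℕ} (hx : t i ≤ x) : 0 ≤ bsBeta t i k x := by
  unfold bsBeta
  split_ifs
  · rfl
  · exact div_nonneg (sub_nonneg.2 hx) (sub_nonneg.2 (ht (by omega)))

lemma bsBeta_le_one (ht : Monotone t) {i : ℤ} {k : ℕ} (hx : x ≤ t (i + k)) :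
    bsBeta t i k x ≤ 1 := by
  unfold bsBeta
  split_ifs with h
  · exact zero_le_one
  · have hlt : t i < t (i + k) := (ht (by omega)).lt_of_ne h
    exact div_le_one_of_le₀ (by linarith) (by linarith)

lemma le_bsBeta {i : ℤ} {k : ℕ} {c : ℝ} (hlt : t i < t (i + k))
    (hc : c * (t (i + k) - t i) ≤ x - t i) : c ≤ bsBeta t i k x := by
  rwa [bsBeta, if_neg hlt.ne, le_div_iff₀ (sub_pos.2 hlt)]

lemma le_one_sub_bsBeta {i : ℤ} {k : ℕ} {c : ℝ} (hlt : t i < t (i + k))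
    (hc : c * (t (i + k) - t i) ≤ t (i + k) - x) : c ≤ 1 - bsBeta t i k x := by
  rw [bsBeta, if_neg hlt.ne, one_sub_div (sub_pos.2 hlt).ne', le_div_iff₀ (sub_pos.2 hlt)]
  linarith

lemma mem_Ico_of_bspline_ne_zero (ht : Monotone t) {p : ℕ} {i : ℤ}
    (h : Bspline t p i x ≠ 0) : x ∈ Ico (t (i - 1)) (t (i + p)) := by
  induction p generalizing i with
  | zero => simpa [Bspline] using h
  | succ p ih =>
    rcases eq_or_ne (Bspline t p i x) 0 with h0 | h0
    · have h1 : Bspline t p (i + 1) x ≠ 0 := fun h1 => h (by simp [Bspline, h0, h1])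
      exact Ico_subset_Ico (ht (by omega)) (ht (by omega)) (ih h1)
    · exact Ico_subset_Ico_right (ht (by omega)) (ih h0)

lemma bsBeta_mul_bspline_nonneg (ht : Monotone t) {p : ℕ} {i : ℤ}
    (hB : 0 ≤ Bspline t p i x) : 0 ≤ bsBeta t (i - 1) (p + 1) x * Bspline t p i x := by
  rcases eq_or_ne (Bspline t p i x) 0 with h | h
  · simp [h]
  · exact mul_nonneg (bsBeta_nonneg ht (mem_Ico_of_bspline_ne_zero ht h).1) hB

lemma one_sub_bsBeta_mul_bspline_nonneg (ht : Monotone t) {p : ℕ} {i : ℤ}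
    (hB : 0 ≤ Bspline t p (i + 1) x) :
    0 ≤ (1 - bsBeta t i (p + 1) x) * Bspline t p (i + 1) x := by
  rcases eq_or_ne (Bspline t p (i + 1) x) 0 with h | h
  · simp [h]
  · refine mul_nonneg (sub_nonneg.2 (bsBeta_le_one ht ?_)) hB
    exact (mem_Ico_of_bspline_ne_zero ht h).2.le.trans (ht (by omega))

lemma bspline_nonneg (ht : Monotone t) (p : ℕ) (i : ℤ) (x : ℝ) : 0 ≤ Bspline t p i x := by
  induction p generalizing i with
  | zero => unfold Bspline; split_ifs <;> norm_num
  | succ p ih =>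
    exact add_nonneg (bsBeta_mul_bspline_nonneg ht (ih i))
      (one_sub_bsBeta_mul_bspline_nonneg ht (ih (i + 1)))

lemma hasFiniteSupport_bspline (ht : Monotone t) (htop : Tendsto t atTop atTop)
    (hbot : Tendsto t atBot atBot) (p : ℕ) (x : ℝ) :
    (fun i => Bspline t p i x).HasFiniteSupport := by
  obtain ⟨N, hN⟩ := eventually_atTop.1 (htop.eventually_gt_atTop x)
  obtain ⟨M, hM⟩ := eventually_atBot.1 (hbot.eventually_le_atBot x)
  refine (finite_Icc (M - p) (N + 1)).subset fun i hi => ?_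
  have hx := mem_Ico_of_bspline_ne_zero ht hi
  constructor
  · by_contra h
    exact (hM (i + p) (by omega)).not_gt hx.2
  · by_contra h
    exact (hN (i - 1) (by omega)).not_ge hx.1

lemma finsum_bspline_eq_one (ht : Monotone t) (htop : Tendsto t atTop atTop)
    (hbot : Tendsto t atBot atBot) (p : ℕ) (x : ℝ) : ∑ᶠ i, Bspline t p i x = 1 := by
  induction p with
  | zero =>
    obtain ⟨i₀, hx, hmin⟩ := Int.exists_least_of_bdd (P := fun i => x < t i)
      (by
        obtain ⟨M, hM⟩ := eventually_atBot.1 (hbot.eventually_le_atBot x)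
        exact ⟨M, fun i hi => not_lt.1 fun h => (hM i h.le).not_gt hi⟩)
      (htop.eventually_gt_atTop x).exists
    have hle : t (i₀ - 1) ≤ x := not_lt.1 fun h => by have := hmin _ h; omega
    rw [finsum_eq_single _ i₀]
    · simp [Bspline, hle, hx]
    · intro j hj
      simp only [Bspline, mem_Ico, ite_eq_right_iff, one_ne_zero, imp_false, not_and, not_lt]
      intro hj₁
      rcases hj.lt_or_gt with h | h
      · exact not_lt.1 fun hj₂ => by have := hmin j hj₂; omega
      · exact absurd (hx.trans_le ((ht (by omega : i₀ ≤ j - 1)).trans hj₁)) (lt_irrefl x)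
  | succ p ih =>
    have hfin := hasFiniteSupport_bspline ht htop hbot p x
    have hfin' : (fun i => Bspline t p (i + 1) x).HasFiniteSupport :=
      hfin.comp_of_injective (add_left_injective 1)
    calc ∑ᶠ i, Bspline t (p + 1) i x
        = ∑ᶠ i, bsBeta t (i - 1) (p + 1) x * Bspline t p i x
          + ∑ᶠ i, (1 - bsBeta t i (p + 1) x) * Bspline t p (i + 1) x :=
          finsum_add_distrib (hfin.fun_mul_right _) (hfin'.fun_mul_right _)
      _ = ∑ᶠ i, bsBeta t (i - 1) (p + 1) x * Bspline t p i x
          + ∑ᶠ i, (1 - bsBeta t (i - 1) (p + 1) x) * Bspline t p i x := by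
          congr 1
          simpa using finsum_comp_equiv (Equiv.addRight (1 : ℤ))
            (f := fun i => (1 - bsBeta t (i - 1) (p + 1) x) * Bspline t p i x)
      _ = ∑ᶠ i, Bspline t p i x := by
          rw [← finsum_add_distrib (hfin.fun_mul_right _) (hfin.fun_mul_right _)]
          exact finsum_congr fun i => by ring
      _ = 1 := ih

lemma pow_le_bspline (ht : Monotone t) {p k : ℕ} {L i : ℤ} {c δ : ℝ} (hc : 0 ≤ c) (hδ : 0 < δ)
    (hx : x ∈ Icc (t (L - 1) + δ) (t L - δ)) (hspan : c * (t (L + p) - t (L - 1 - p)) ≤ δ)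
    (hk : k ≤ p) (hi : i ≤ L) (hi' : L ≤ i + k) : c ^ k ≤ Bspline t k i x := by
  have hspan' {a b : ℤ} (ha : L - 1 - p ≤ a) (hb : b ≤ L + p) : c * (t b - t a) ≤ δ :=
    (mul_le_mul_of_nonneg_left (sub_le_sub (ht hb) (ht ha)) hc).trans hspan
  induction k generalizing i with
  | zero =>
    obtain rfl : i = L := by omega
    simp [Bspline, show t (i - 1) ≤ x by linarith [hx.1], show x < t i by linarith [hx.2]]
  | succ k ih =>
    have h₁ := bsBeta_mul_bspline_nonneg ht (bspline_nonneg ht k i x)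
    have h₂ := one_sub_bsBeta_mul_bspline_nonneg ht (bspline_nonneg ht k (i + 1) x)
    rw [Bspline, pow_succ']
    -- Follow the term whose support still contains `[t (L - 1), t L]`: its coefficient is `≥ c`,
    -- as `x` is `δ`-far from the ends of that interval and the knot span involved is `≤ δ / c`.
    by_cases hL : L ≤ i + k
    · have hidx : i - 1 + ((k + 1 : ℕ) : ℤ) = i + k := by push_cast; ring
      have hβ : c ≤ bsBeta t (i - 1) (k + 1) x := by
        have hle : t (i - 1) ≤ t (L - 1) := ht (by omega)
        refine le_bsBeta ?_ ?_ <;> rw [hidx]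
        · linarith [ht hL, hx.1, hx.2]
        · linarith [hspan' (a := i - 1) (b := i + k) (by omega) (by omega), hx.1]
      have := mul_le_mul hβ (ih (by omega) hi hL) (by positivity) (hc.trans hβ)
      linarith
    · have hidx : i + ((k + 1 : ℕ) : ℤ) = L := by push_cast; omega
      have hβ : c ≤ 1 - bsBeta t i (k + 1) x := by
        have hle : t i ≤ t (L - 1) := ht (by omega)
        refine le_one_sub_bsBeta ?_ ?_ <;> rw [hidx]
        · linarith [hx.1, hx.2]
        · linarith [hspan' (a := i) (b := L) (by omega) (by omega), hx.2]
      have := mul_le_mul hβ (ih (i := i + 1) (by omega) (by omega) (by omega)) (by positivity)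
        (hc.trans hβ)
      linarith

end Bspline

section Nurbs

variable {t w : ℤ → ℝ} {p : ℕ} {i : ℤ} {x : ℝ}

lemma nurbs_nonneg (ht : Monotone t) (hw : ∀ j, 0 ≤ w j) : 0 ≤ nurbs t w p i x :=
  div_nonneg (mul_nonneg (hw i) (bspline_nonneg ht p i x))
    (finsum_nonneg fun j => mul_nonneg (hw j) (bspline_nonneg ht p j x))

lemma mul_bspline_le_finsum (ht : Monotone t) (htop : Tendsto t atTop atTop)
    (hbot : Tendsto t atBot atBot) (hw : ∀ j, 0 ≤ w j) :
    w i * Bspline t p i x ≤ ∑ᶠ j, w j * Bspline t p j x :=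
  single_le_finsum i ((hasFiniteSupport_bspline ht htop hbot p x).fun_mul_right w)
    fun j => mul_nonneg (hw j) (bspline_nonneg ht p j x)

lemma nurbs_le_one (ht : Monotone t) (htop : Tendsto t atTop atTop)
    (hbot : Tendsto t atBot atBot) (hw : ∀ j, 0 ≤ w j) : nurbs t w p i x ≤ 1 :=
  div_le_one_of_le₀ (mul_bspline_le_finsum ht htop hbot hw)
    (finsum_nonneg fun j => mul_nonneg (hw j) (bspline_nonneg ht p j x))

lemma div_le_nurbs (ht : Monotone t) (htop : Tendsto t atTop atTop)
    (hbot : Tendsto t atBot atBot) (hw : ∀ j, 0 ≤ w j) {W : ℝ} (hW : ∀ j, w j ≤ W) :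
    w i * Bspline t p i x / W ≤ nurbs t w p i x := by
  have hfin := hasFiniteSupport_bspline ht htop hbot p x
  have hnum := mul_bspline_le_finsum (i := i) (p := p) (x := x) ht htop hbot hw
  have hden : ∑ᶠ j, w j * Bspline t p j x ≤ W := by
    calc ∑ᶠ j, w j * Bspline t p j x ≤ ∑ᶠ j, W * Bspline t p j x :=
          finsum_le_finsum' (hfin.fun_mul_right w) (hfin.fun_mul_right _)
            fun j => mul_le_mul_of_nonneg_right (hW j) (bspline_nonneg ht p j x)
      _ = W := by rw [← mul_finsum, finsum_bspline_eq_one ht htop hbot, mul_one]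
  have hnum₀ := mul_nonneg (hw i) (bspline_nonneg ht p i x)
  rcases (hnum₀.trans hnum).eq_or_lt with h | h
  · simp [nurbs, le_antisymm (h ▸ hnum) hnum₀]
  · exact div_le_div_of_nonneg_left hnum₀ h hden

end Nurbs

def extendKnots (n : ℕ) (t : ℕ → ℝ) (j : ℤ) : ℝ :=
  if j < 0 then t 0 + j else if (n : ℤ) < j then t n + ((j - n : ℤ) : ℝ) else t j.toNat

section extendKnots

variable {n : ℕ} {t : ℕ → ℝ}

lemma extendKnots_natCast {k : ℕ} (hk : k ≤ n) : extendKnots n t k = t k := by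
  simp [extendKnots, not_lt.2 hk]

lemma monotone_extendKnots (ht : MonotoneOn t (Iic n)) : Monotone (extendKnots n t) := by
  refine monotone_int_of_le_succ fun j => ?_
  unfold extendKnots
  split_ifs <;> push_cast <;> try first | omega | linarith
  · obtain rfl : j = -1 := by omega
    simp
  · obtain rfl : j = n := by omega
    simp
  · exact ht (mem_Iic.2 (by omega)) (mem_Iic.2 (by omega)) (by omega)

lemma tendsto_extendKnots_atTop : Tendsto (extendKnots n t) atTop atTop := by
  refine (tendsto_atTop_add_const_left _ (t n - n) tendsto_intCast_atTop_atTop).congr' ?_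
  filter_upwards [eventually_gt_atTop (n : ℤ)] with j hj
  simp [extendKnots, hj, (Int.natCast_nonneg n).trans_lt hj |>.not_gt]
  ring

lemma tendsto_extendKnots_atBot : Tendsto (extendKnots n t) atBot atBot := by
  refine (tendsto_atBot_add_const_left _ (t 0) (tendsto_intCast_atBot_iff.2 tendsto_id)).congr' ?_
  filter_upwards [eventually_lt_atBot (0 : ℤ)] with j hj
  simp [extendKnots, hj]

end extendKnots

def extendWeights (n : ℕ) (w : ℕ → ℝ) (j : ℤ) : ℝ :=
  if 1 ≤ j ∧ j ≤ (n : ℤ) then w j.toNat else 1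

lemma extendWeights_mem_Icc {n : ℕ} {w : ℕ → ℝ} {a b : ℝ}
    (hw : ∀ k, 1 ≤ k → k ≤ n → w k ∈ Icc a b) (j : ℤ) :
    extendWeights n w j ∈ Icc (min a 1) (max b 1) := by
  unfold extendWeights
  split_ifs with h
  · obtain ⟨h₁, h₂⟩ := hw j.toNat (by omega) (by omega)
    exact ⟨min_le_of_left_le h₁, le_max_of_le_left h₂⟩
  · exact ⟨min_le_right _ _, le_max_right _ _⟩

section RlocNurbs

variable {p : ℕ} {t w : ℕ → ℝ} {wmin wmax x : ℝ}

lemma rlocNurbs_eq :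
    RlocNurbs p t w = nurbs (extendKnots (3 * p + 1) t) (extendWeights (2 * p + 1) w) p (p + 1) :=
  rfl

lemma rlocNurbs_mem_Icc (ht : MonotoneOn t (Iic (3 * p + 1))) (hwmin : 0 ≤ wmin)
    (hw : ∀ k, 1 ≤ k → k ≤ 2 * p + 1 → w k ∈ Icc wmin wmax) (x : ℝ) :
    RlocNurbs p t w x ∈ Icc 0 1 := by
  have hw₀ j := (le_min hwmin zero_le_one).trans (extendWeights_mem_Icc hw j).1
  rw [rlocNurbs_eq]
  exact ⟨nurbs_nonneg (monotone_extendKnots ht) hw₀,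
    nurbs_le_one (monotone_extendKnots ht) tendsto_extendKnots_atTop tendsto_extendKnots_atBot hw₀⟩

lemma le_rlocNurbs (ht : MonotoneOn t (Iic (3 * p + 1))) (hwmin : 0 ≤ wmin)
    (hw : ∀ k, 1 ≤ k → k ≤ 2 * p + 1 → w k ∈ Icc wmin wmax) {k : ℕ} (hk : p ≤ k)
    (hk' : k ≤ 2 * p) (hlt : t k < t (k + 1)) {K : ℝ} (hK : 0 < K)
    (hspan : t (3 * p + 1) - t 0 ≤ K * (t (k + 1) - t k))
    (hx : x ∈ Icc (t k + (t (k + 1) - t k) / 4) (t (k + 1) - (t (k + 1) - t k) / 4)) :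
    wmin * (4 * K)⁻¹ ^ p / max wmax 1 ≤ RlocNurbs p t w x := by
  set T := extendKnots (3 * p + 1) t
  have hT : Monotone T := monotone_extendKnots ht
  have hTk : T (k + 1 - 1) = t k := by
    rw [add_sub_cancel_right]
    exact extendKnots_natCast (by omega)
  have hTk' : T (k + 1) = t (k + 1) := mod_cast extendKnots_natCast (by omega)
  have hTspan : T (k + 1 + p) - T (k + 1 - 1 - p) ≤ t (3 * p + 1) - t 0 := by
    rw [← extendKnots_natCast (t := t) (le_refl (3 * p + 1)),
      ← extendKnots_natCast (t := t) (Nat.zero_le (3 * p + 1))]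
    exact sub_le_sub (hT (by omega)) (hT (by omega))
  have hcspan : (4 * K)⁻¹ * (t (3 * p + 1) - t 0) ≤ (t (k + 1) - t k) / 4 := by
    calc (4 * K)⁻¹ * (t (3 * p + 1) - t 0) ≤ (4 * K)⁻¹ * (K * (t (k + 1) - t k)) := by gcongr
      _ = (t (k + 1) - t k) / 4 := by field_simp
  have hB : (4 * K)⁻¹ ^ p ≤ Bspline T p (p + 1) x :=
    pow_le_bspline hT (by positivity) (δ := (t (k + 1) - t k) / 4) (L := k + 1) (by linarith)
      (by rwa [hTk, hTk']) ((mul_le_mul_of_nonneg_left hTspan (by positivity)).trans hcspan)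
      le_rfl (by omega) (by omega)
  have hwp : extendWeights (2 * p + 1) w (p + 1) = w (p + 1) := by
    rw [extendWeights, if_pos (by omega)]
    simp
  have hw₀ j := (le_min hwmin zero_le_one).trans (extendWeights_mem_Icc hw j).1
  rw [rlocNurbs_eq]
  refine le_trans ?_ (div_le_nurbs hT tendsto_extendKnots_atTop tendsto_extendKnots_atBot hw₀
    fun j => (extendWeights_mem_Icc hw j).2)
  have hwp' := hw (p + 1) (by omega) (by omega)
  rw [hwp]
  gcongr
  exacts [hwmin.trans hwp'.1, hwp'.1]

end RlocNurbs

section Mesh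

variable {κ : ℝ}

lemma le_pow_mul_of_ratio {d : ℕ → ℝ} {m : ℕ} (hκ : 1 ≤ κ) (hd : ∀ j < m, 0 ≤ d j)
    (hup : ∀ j, j + 1 < m → d (j + 1) ≤ κ * d j)
    (hdown : ∀ j, j + 1 < m → d j ≤ κ * d (j + 1)) {i j : ℕ} (hi : i < m) (hj : j < m) :
    d j ≤ κ ^ (m - 1) * d i := by
  have hκ₀ : 0 ≤ κ := zero_le_one.trans hκ
  have key : ∀ i j, i ≤ j → j < m → d j ≤ κ ^ (j - i) * d i ∧ d i ≤ κ ^ (j - i) * d j := by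
    intro i j hij hj
    induction j, hij using Nat.le_induction with
    | base => simp
    | succ j hij ih =>
      obtain ⟨ih₁, ih₂⟩ := ih (by omega)
      rw [Nat.sub_add_comm hij, pow_succ]
      constructor
      · calc d (j + 1) ≤ κ * d j := hup j hj
          _ ≤ κ * (κ ^ (j - i) * d i) := mul_le_mul_of_nonneg_left ih₁ hκ₀
          _ = κ ^ (j - i) * κ * d i := by ring
      · calc d i ≤ κ ^ (j - i) * d j := ih₂
          _ ≤ κ ^ (j - i) * (κ * d (j + 1)) := by gcongr; exact hdown j hj
          _ = κ ^ (j - i) * κ * d (j + 1) := by ring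
  have hpow {e : ℕ} (he : e ≤ m - 1) {y : ℝ} (hy : 0 ≤ y) : κ ^ e * y ≤ κ ^ (m - 1) * y :=
    mul_le_mul_of_nonneg_right (pow_le_pow_right₀ hκ he) hy
  rcases le_total i j with h | h
  · exact (key i j h hj).1.trans (hpow (by omega) (hd i hi))
  · exact (key j i h hi).2.trans (hpow (by omega) (hd i hi))

lemma sub_le_mul_gap {z : ℕ → ℝ} {m a : ℕ} (hκ : 1 ≤ κ) (hz : StrictMonoOn z (Iic m))
    (hratio : ∀ j, 1 ≤ j → j < m →
      (z (j + 1) - z j) / (z j - z (j - 1)) ≤ κ ∧ (z j - z (j - 1)) / (z (j + 1) - z j) ≤ κ)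
    (ha : a < m) : z m - z 0 ≤ m * κ ^ (m - 1) * (z (a + 1) - z a) := by
  set d := fun j => z (j + 1) - z j
  have hd : ∀ j < m, 0 < d j := fun j hj =>
    sub_pos.2 (hz (mem_Iic.2 (by omega)) (mem_Iic.2 (by omega)) (by omega))
  have hup : ∀ j, j + 1 < m → d (j + 1) ≤ κ * d j := fun j hj => by
    have := (hratio (j + 1) (by omega) hj).1
    rw [Nat.add_sub_cancel, div_le_iff₀ (hd j (by omega))] at this
    exact this
  have hdown : ∀ j, j + 1 < m → d j ≤ κ * d (j + 1) := fun j hj => by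
    have := (hratio (j + 1) (by omega) hj).2
    rw [Nat.add_sub_cancel, div_le_iff₀ (hd (j + 1) hj)] at this
    exact this
  rw [← Finset.sum_range_sub]
  calc ∑ j ∈ Finset.range m, d j ≤ ∑ _j ∈ Finset.range m, κ ^ (m - 1) * d a :=
        Finset.sum_le_sum fun j hj => le_pow_mul_of_ratio hκ (fun j hj => (hd j hj).le) hup hdown
          ha (Finset.mem_range.1 hj)
    _ = m * κ ^ (m - 1) * d a := by simp [mul_assoc]

lemma sub_le_mul_of_image_eq {t z : ℕ → ℝ} {n m k : ℕ} (hκ : 1 ≤ κ)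
    (hz : StrictMonoOn z (Iic m)) (himage : t '' Iic (n + 1) = z '' Iic m)
    (hratio : ∀ j, 1 ≤ j → j < m →
      (z (j + 1) - z j) / (z j - z (j - 1)) ≤ κ ∧ (z j - z (j - 1)) / (z (j + 1) - z j) ≤ κ)
    (hk : k ≤ n) (hlt : t k < t (k + 1)) :
    t (n + 1) - t 0 ≤ (n + 1 : ℕ) * κ ^ n * (t (k + 1) - t k) := by
  have hmem {j : ℕ} (hj : j ≤ n + 1) : t j ∈ z '' Iic m := himage ▸ mem_image_of_mem t hj
  obtain ⟨a, ha, hza⟩ := hmem (by omega : k ≤ n + 1)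
  obtain ⟨b, hb, hzb⟩ := hmem (by omega : k + 1 ≤ n + 1)
  obtain ⟨a₀, ha₀, hz₀⟩ := hmem (Nat.zero_le _)
  obtain ⟨aₙ, haₙ, hzₙ⟩ := hmem le_rfl
  rw [mem_Iic] at ha hb ha₀ haₙ
  have hab : a < b := (hz.lt_iff_lt (mem_Iic.2 ha) (mem_Iic.2 hb)).1 (hza ▸ hzb ▸ hlt)
  have hmn : m ≤ n + 1 := by
    have hmaps : MapsTo z (Finset.Iic m) ((Finset.Iic (n + 1)).image t) := fun i hi => by
      rw [Finset.coe_image, Finset.coe_Iic, himage]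
      exact mem_image_of_mem z (by simpa using hi)
    simpa using (Finset.card_le_card_of_injOn z hmaps (by simpa using hz.injOn)).trans
      Finset.card_image_le
  have hgap : z (a + 1) - z a ≤ t (k + 1) - t k := by
    rw [← hza, ← hzb]
    exact sub_le_sub_right (hz.monotoneOn (mem_Iic.2 (by omega)) (mem_Iic.2 hb) (by omega)) _
  calc t (n + 1) - t 0 ≤ z m - z 0 := by
        rw [← hzₙ, ← hz₀]
        exact sub_le_sub (hz.monotoneOn (mem_Iic.2 haₙ) (mem_Iic.2 le_rfl) haₙ)
          (hz.monotoneOn (mem_Iic.2 (Nat.zero_le _)) (mem_Iic.2 ha₀) (Nat.zero_le _))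
    _ ≤ m * κ ^ (m - 1) * (z (a + 1) - z a) := sub_le_mul_gap hκ hz hratio (by omega)
    _ ≤ (n + 1 : ℕ) * κ ^ n * (t (k + 1) - t k) := by
        have := sub_pos.2 (hz (mem_Iic.2 (by omega)) (mem_Iic.2 (by omega)) (Nat.lt_succ_self a))
        gcongr
        omega

end Mesh

section Piecewise

variable {φ g : ℝ → ℝ} {a b : ℝ}

lemma integrableOn_Icc_of_eqOn_Ioo (hg : ContinuousOn g (Icc a b))
    (hφ : EqOn φ g (Ioo a b)) : IntegrableOn φ (Icc a b) := by
  rw [integrableOn_Icc_iff_integrableOn_Ioo]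
  exact (hg.integrableOn_Icc.mono_set Ioo_subset_Icc_self).congr_fun hφ.symm measurableSet_Ioo

lemma bddAbove_abs_image_Icc_of_eqOn_Ioo (hab : a ≤ b) (hg : ContinuousOn g (Icc a b))
    (hφ : EqOn φ g (Ioo a b)) : BddAbove ((|φ ·|) '' Icc a b) := by
  have hIoo : (|φ ·|) '' Ioo a b ⊆ (|g ·|) '' Icc a b := by
    rintro _ ⟨x, hx, rfl⟩
    exact ⟨x, Ioo_subset_Icc_self hx, congrArg abs (hφ hx).symm⟩
  have hcover : Icc a b ⊆ Ioo a b ∪ {a, b} := by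
    rw [← Icc_sdiff_Ioo_same hab]
    exact fun x hx => by by_cases h : x ∈ Ioo a b <;> simp [h, hx]
  refine BddAbove.mono (image_mono hcover) ?_
  rw [image_union]
  exact ((isCompact_Icc.bddAbove_image hg.abs).mono hIoo).union
    (((finite_singleton b).insert a).image _).bddAbove

variable {M : ℕ} {σ : ℕ → ℝ}

lemma integrableOn_of_piecewise (hσ : ∀ m < M, σ m < σ (m + 1))
    (hpiece : ∀ m < M, ∃ g : ℝ → ℝ, ContinuousOn g (Icc (σ m) (σ (m + 1))) ∧
      EqOn φ g (Ioo (σ m) (σ (m + 1)))) :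
    IntegrableOn φ (Icc (σ 0) (σ M)) := by
  have hmono : σ 0 ≤ σ M := (strictMonoOn_Iic_of_lt_succ fun m hm => hσ m hm).monotoneOn
    (mem_Iic.2 (Nat.zero_le M)) (mem_Iic.2 le_rfl) (Nat.zero_le M)
  rw [← intervalIntegrable_iff_integrableOn_Icc_of_le hmono]
  refine IntervalIntegrable.trans_iterate fun m hm => ?_
  obtain ⟨g, hg, hφ⟩ := hpiece m hm
  exact (intervalIntegrable_iff_integrableOn_Icc_of_le (hσ m hm).le).2
    (integrableOn_Icc_of_eqOn_Ioo hg hφ)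

lemma bddAbove_abs_image_of_piecewise (hσ : ∀ m < M, σ m < σ (m + 1))
    (hpiece : ∀ m < M, ∃ g : ℝ → ℝ, ContinuousOn g (Icc (σ m) (σ (m + 1))) ∧
      EqOn φ g (Ioo (σ m) (σ (m + 1)))) :
    BddAbove ((|φ ·|) '' Icc (σ 0) (σ M)) := by
  have hmono := (strictMonoOn_Iic_of_lt_succ fun m hm => hσ m hm).monotoneOn
  suffices ∀ n ≤ M, BddAbove ((|φ ·|) '' Icc (σ 0) (σ n)) from this M le_rfl
  intro n hn
  induction n with
  | zero => simp
  | succ n ih =>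
    obtain ⟨g, hg, hφ⟩ := hpiece n hn
    have h₀ : σ 0 ≤ σ n := hmono (mem_Iic.2 (Nat.zero_le M)) (mem_Iic.2 (by omega)) (Nat.zero_le n)
    rw [← Icc_union_Icc_eq_Icc h₀ (hσ n hn).le, image_union]
    exact (ih (by omega)).union (bddAbove_abs_image_Icc_of_eqOn_Ioo (hσ n hn).le hg hφ)

end Piecewise

lemma setIntegral_abs_one_sub_mul_le {φ R : ℝ → ℝ} {c d ε C r q : ℝ} (hcd : c ≤ d)
    (hφ : IntegrableOn φ (Icc c d)) (hε : ∀ x ∈ Icc c d, ε ≤ φ x)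
    (hC : ∀ x ∈ Icc c d, |φ x| ≤ C) (hR : ∀ x, R x ∈ Icc 0 1)
    (hr : ∀ x ∈ Icc (c + (d - c) / 4) (d - (d - c) / 4), r ≤ R x) (hr₀ : 0 ≤ r)
    (hC₀ : 0 < C) (hq₀ : 0 ≤ q) (hq : q ≤ r * ε / (2 * C)) :
    ∫ x in Icc c d, |(1 - R x) * φ x| ≤ (1 - q) * ∫ x in Icc c d, |φ x| := by
  rw [le_div_iff₀' (by positivity)] at hq
  set I := Icc (c + (d - c) / 4) (d - (d - c) / 4)
  have hI : I ⊆ Icc c d := Icc_subset_Icc (by linarith) (by linarith)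
  have hint : IntegrableOn (|φ ·|) (Icc c d) := hφ.abs
  have hint' : IntegrableOn (fun x => r * I.indicator (|φ ·|) x) (Icc c d) :=
    (hint.indicator measurableSet_Icc).const_mul r
  have hpt : ∀ x, |(1 - R x) * φ x| ≤ |φ x| - r * I.indicator (|φ ·|) x := by
    intro x
    rw [abs_mul, abs_of_nonneg (sub_nonneg.2 (hR x).2)]
    by_cases hx : x ∈ I
    · rw [indicator_of_mem hx]
      nlinarith [hr x hx, abs_nonneg (φ x)]
    · rw [indicator_of_notMem hx]
      nlinarith [(hR x).1, abs_nonneg (φ x)]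
  have hlower : ε * ((d - c) / 2) ≤ ∫ x in I, |φ x| := by
    have := setIntegral_ge_of_const_le measurableSet_Icc (by simp)
      (fun x hx => (hε x (hI hx)).trans (le_abs_self _)) (hint.mono_set hI)
    rw [Real.volume_real_Icc_of_le (by linarith), smul_eq_mul] at this
    linarith
  have hupper : ∫ x in Icc c d, |φ x| ≤ C * (d - c) := by
    have := setIntegral_mono_on hint (integrableOn_const measure_Icc_lt_top.ne) measurableSet_Icc hC
    rw [setIntegral_const, Real.volume_real_Icc_of_le hcd, smul_eq_mul] at this
    linarith
  calc ∫ x in Icc c d, |(1 - R x) * φ x|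
      ≤ ∫ x in Icc c d, (|φ x| - r * I.indicator (|φ ·|) x) :=
        integral_mono_of_nonneg (ae_of_all _ fun x => abs_nonneg _) (hint.sub hint')
          (ae_of_all _ hpt)
    _ = (∫ x in Icc c d, |φ x|) - r * ∫ x in I, |φ x| := by
        rw [integral_sub hint hint', integral_const_mul, setIntegral_indicator measurableSet_Icc,
          inter_eq_self_of_subset_right hI]
    _ ≤ (1 - q) * ∫ x in Icc c d, |φ x| := by
        linarith [mul_le_mul_of_nonneg_left hupper hq₀, mul_le_mul_of_nonneg_left hlower hr₀,
          mul_le_mul_of_nonneg_right hq (by linarith : 0 ≤ (d - c) / 2)]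

theorem nurbs_contraction_lemma_general
    (A B : ℝ) (κmax : ℝ) (hκ : 1 ≤ κmax)
    (wmin wmax : ℝ) (hw0 : 0 < wmin) (p : ℕ)
    (φ : ℝ → ℝ)
    (hφpw : ∃ (M : ℕ) (σ : ℕ → ℝ), 1 ≤ M ∧ σ 0 = A ∧ σ M = B ∧
      (∀ m < M, σ m < σ (m + 1)) ∧
      (∀ m < M, ∃ g : ℝ → ℝ, ContDiffOn ℝ 1 g (Icc (σ m) (σ (m + 1))) ∧
        ∀ x ∈ Ioo (σ m) (σ (m + 1)), φ x = g x))
    (hφpos : ∃ ε > 0, ∀ x ∈ Icc A B, ε ≤ φ x) :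
    ∃ q : ℝ, 0 < q ∧ q ≤ 1 ∧
      ∀ tt : ℕ → ℝ,
        (∀ k < 3 * p + 1, tt k ≤ tt (k + 1)) →
        (∀ k ≤ 3 * p + 1, tt k ∈ Icc A B) →
        (∃ (m : ℕ) (zc : ℕ → ℝ),
          (∀ jj < m, zc jj < zc (jj + 1)) ∧
          {x : ℝ | ∃ k ≤ 3 * p + 1, tt k = x} = {x : ℝ | ∃ jj ≤ m, zc jj = x} ∧
          ∀ jj, 1 ≤ jj → jj < m →
            (zc (jj + 1) - zc jj) / (zc jj - zc (jj - 1)) ≤ κmax ∧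
            (zc jj - zc (jj - 1)) / (zc (jj + 1) - zc jj) ≤ κmax) →
        ∀ ww : ℕ → ℝ, (∀ k, 1 ≤ k → k ≤ 2 * p + 1 → ww k ∈ Icc wmin wmax) →
        ∀ ℓ, p + 1 ≤ ℓ → ℓ ≤ 2 * p + 1 →
          (∫ x in Icc (tt (ℓ - 1)) (tt ℓ), |(1 - RlocNurbs p tt ww x) * φ x|)
            ≤ (1 - q) * ∫ x in Icc (tt (ℓ - 1)) (tt ℓ), |φ x| := by
  obtain ⟨ε, hε, hεφ⟩ := hφpos
  obtain ⟨M, σ, -, rfl, rfl, hσ, hpiece⟩ := hφpw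
  have hcont : ∀ m < M, ∃ g : ℝ → ℝ, ContinuousOn g (Icc (σ m) (σ (m + 1))) ∧
      EqOn φ g (Ioo (σ m) (σ (m + 1))) :=
    fun m hm => (hpiece m hm).imp fun g hg => ⟨hg.1.continuousOn, hg.2⟩
  obtain ⟨C, hC⟩ := bddAbove_abs_image_of_piecewise hσ hcont
  set K : ℝ := (3 * p + 1 : ℕ) * κmax ^ (3 * p)
  set r := wmin * (4 * K)⁻¹ ^ p / max wmax 1
  refine ⟨min 1 (r * ε / (2 * max C 1)), by positivity, min_le_left _ _, ?_⟩
  rintro t ht htσ ⟨m, z, hz, himage, hratio⟩ w hw ℓ hℓ hℓ'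
  obtain ⟨k, rfl⟩ : ∃ k, ℓ = k + 1 := ⟨ℓ - 1, by omega⟩
  rw [Nat.add_sub_cancel]
  have htmono : MonotoneOn t (Iic (3 * p + 1)) :=
    monotoneOn_of_le_add_one ordConnected_Iic fun k _ _ hk => ht k (by simpa using hk)
  have hsub : Icc (t k) (t (k + 1)) ⊆ Icc (σ 0) (σ M) :=
    Icc_subset_Icc (htσ k (by omega)).1 (htσ (k + 1) (by omega)).2
  rcases (ht k (by omega)).eq_or_lt with heq | hlt
  · simp [heq]
  have hspan := sub_le_mul_of_image_eq hκ (strictMonoOn_Iic_of_lt_succ fun j hj => hz j hj)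
    himage hratio (by omega : k ≤ 3 * p) hlt
  exact setIntegral_abs_one_sub_mul_le hlt.le ((integrableOn_of_piecewise hσ hcont).mono_set hsub)
    (fun x hx => hεφ x (hsub hx)) (fun x hx => (hC ⟨x, hsub hx, rfl⟩).trans (le_max_left _ 1))
    (rlocNurbs_mem_Icc htmono hw0.le hw)
    (fun x hx => le_rlocNurbs htmono hw0.le hw (by omega) (by omega) hlt (by positivity) hspan hx)
    (by positivity) (by positivity) (by positivity) (min_le_right _ _)

/-- Lemma 4.3: the key contraction estimate implying assumption (A2) for NURBS
spaces. -/
theorem nurbs_contraction_lemma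
    (A B : ℝ) (hAB : A < B) (κmax : ℝ) (hκ : 1 ≤ κmax)
    (wmin wmax : ℝ) (hw0 : 0 < wmin) (hww : wmin ≤ wmax) (p : ℕ)
    (φ : ℝ → ℝ)
    (hφpw : ∃ (M : ℕ) (σ : ℕ → ℝ), 1 ≤ M ∧ σ 0 = A ∧ σ M = B ∧
      (∀ m < M, σ m < σ (m + 1)) ∧
      (∀ m < M, ∃ g : ℝ → ℝ, ContDiffOn ℝ 1 g (Icc (σ m) (σ (m + 1))) ∧
        ∀ x ∈ Ioo (σ m) (σ (m + 1)), φ x = g x))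
    (hφpos : ∃ ε > 0, ∀ x ∈ Icc A B, ε ≤ φ x) :
    ∃ q : ℝ, 0 < q ∧ q ≤ 1 ∧
      ∀ tt : ℕ → ℝ,
        (∀ k < 3 * p + 1, tt k ≤ tt (k + 1)) →
        (∀ k ≤ 3 * p + 1, tt k ∈ Icc A B) →
        (∃ (m : ℕ) (zc : ℕ → ℝ),
          (∀ jj < m, zc jj < zc (jj + 1)) ∧
          {x : ℝ | ∃ k ≤ 3 * p + 1, tt k = x} = {x : ℝ | ∃ jj ≤ m, zc jj = x} ∧
          ∀ jj, 1 ≤ jj → jj < m →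
            (zc (jj + 1) - zc jj) / (zc jj - zc (jj - 1)) ≤ κmax ∧
            (zc jj - zc (jj - 1)) / (zc (jj + 1) - zc jj) ≤ κmax) →
        ∀ ww : ℕ → ℝ, (∀ k, 1 ≤ k → k ≤ 2 * p + 1 → ww k ∈ Icc wmin wmax) →
        ∀ ℓ, p + 1 ≤ ℓ → ℓ ≤ 2 * p + 1 →
          (∫ x in Icc (tt (ℓ - 1)) (tt ℓ), |(1 - RlocNurbs p tt ww x) * φ x|)
            ≤ (1 - q) * ∫ x in Icc (tt (ℓ - 1)) (tt ℓ), |φ x| :=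
  nurbs_contraction_lemma_general A B κmax hκ wmin wmax hw0 p φ hφpw hφpos
end
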